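/- arXiv:1609.09843 — 9 statements merged into one kernel-verified Lean document; each statement's English description precedes it below -/
import Mathlib

section
/- Let P be an n×n positive semidefinite Hermitian matrix of rank k < n that is saturated, i.e., every k×k principal submatrix of P is positive definite. Let G be an n×n diagonal positive semidefinite matrix with rank G = m < n - k. Then rank(P + G) = k + m. -/
open Matrix
open scoped ComplexOrder

open Module LinearMap Finset

/-!
Saturation says that no nonzero vector of `ker P` vanishes on a set `T` of `n - k` coordinates
(its support would lie in the `k` coordinates of `Tᶜ`). As `dim ker P = n - k`, restriction to `T`
is then an isomorphism `ker P ≃ ℂ^T`. Choose `T` containing the support `S` of the diagonal of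
`G`, which has `m ≤ n - k` elements: restriction `ker P → ℂ^S` is onto, and its kernel is
`ker P ⊓ ker G = ker (P + G)`, of dimension `n - k - m`.
-/

abbrev Finset.restrictₗ {ι : Type*} (R : Type*) [Semiring R] (s : Finset ι) :
    (ι → R) →ₗ[R] (s → R) :=
  funLeft R R (↑)

theorem Finset.mem_ker_restrictₗ {ι R : Type*} [Semiring R] {s : Finset ι} {x : ι → R} :
    x ∈ ker (s.restrictₗ R) ↔ ∀ i ∈ s, x i = 0 := by
  simp [funext_iff]

theorem Matrix.ker_diagonal_mulVecLin {ι R : Type*} [Fintype ι] [DecidableEq ι]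
    [CommSemiring R] [NoZeroDivisors R] [DecidableEq R] (d : ι → R) :
    ker (diagonal d).mulVecLin = ker ((univ.filter (d · ≠ 0)).restrictₗ R) := by
  ext x
  simp [funext_iff, mulVec_diagonal, or_iff_not_imp_left]

theorem Matrix.rank_add_finrank_ker_mulVecLin {m n K : Type*} [Fintype n] [Field K]
    (A : Matrix m n K) : A.rank + finrank K (ker A.mulVecLin) = Fintype.card n := by
  rw [Matrix.rank, finrank_range_add_finrank_ker, finrank_fintype_fun_eq_card]

theorem Matrix.PosSemidef.ker_add {n 𝕜 : Type*} [Fintype n] [RCLike 𝕜] {A B : Matrix n n 𝕜}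
    (hA : A.PosSemidef) (hB : B.PosSemidef) :
    ker (A + B).mulVecLin = ker A.mulVecLin ⊓ ker B.mulVecLin := by
  ext x
  simp only [mem_ker, Submodule.mem_inf, mulVecLin_apply, add_mulVec]
  refine ⟨fun h => ?_, fun ⟨hAx, hBx⟩ => by rw [hAx, hBx, add_zero]⟩
  have hsum : star x ⬝ᵥ A *ᵥ x + star x ⬝ᵥ B *ᵥ x = 0 := by
    rw [← dotProduct_add, h, dotProduct_zero]
  obtain ⟨hAx, hBx⟩ := (add_eq_zero_iff_of_nonneg (hA.dotProduct_mulVec_nonneg x)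
    (hB.dotProduct_mulVec_nonneg x)).mp hsum
  exact ⟨(hA.dotProduct_mulVec_zero_iff x).mp hAx, (hB.dotProduct_mulVec_zero_iff x).mp hBx⟩

theorem Matrix.disjoint_ker_mulVecLin_ker_restrictₗ {ι R : Type*} [Fintype ι] [DecidableEq ι]
    [CommRing R] [PartialOrder R] [StarRing R] {A : Matrix ι ι R} {s : Finset ι}
    (hA : (A.submatrix ((↑) : ↥sᶜ → ι) (↑)).PosDef) :
    Disjoint (ker A.mulVecLin) (ker (s.restrictₗ R)) := by
  rw [Submodule.disjoint_def]
  intro x hAx hsx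
  rw [mem_ker, mulVecLin_apply] at hAx
  rw [Finset.mem_ker_restrictₗ] at hsx
  set y : ↥sᶜ → R := fun i => x i
  have hy : A.submatrix ((↑) : ↥sᶜ → ι) (↑) *ᵥ y = 0 := by
    funext i
    have hs : ∑ j ∈ s, A i j * x j = 0 :=
      Finset.sum_eq_zero fun j hj => by rw [hsx j hj, mul_zero]
    calc _ = ∑ j ∈ sᶜ, A i j * x j := Finset.sum_coe_sort sᶜ (fun j => A i j * x j)
      _ = ∑ j, A i j * x j := by rw [← Finset.sum_compl_add_sum s, hs, add_zero]
      _ = 0 := congrFun hAx i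
  have hy0 : y = 0 := by
    by_contra hne
    simpa [hy] using (hA.dotProduct_mulVec_pos hne).ne'
  funext i
  by_cases hi : i ∈ s
  · exact hsx i hi
  · exact congrFun hy0 ⟨i, Finset.mem_compl.mpr hi⟩

theorem Submodule.finrank_inf_ker_restrictₗ_add_card {ι K : Type*} [Fintype ι] [Field K]
    (V : Submodule K (ι → K)) {S T : Finset ι} (hST : S ⊆ T)
    (hV : Disjoint V (ker (T.restrictₗ K))) (hdim : finrank K V = #T) :
    finrank K ↥(V ⊓ ker (S.restrictₗ K)) + #S = finrank K V := by
  have hT_inj : Function.Injective ((T.restrictₗ K).domRestrict V) := by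
    rw [← ker_eq_bot, ker_domRestrict, ← Submodule.disjoint_iff_comap_eq_bot]
    exact hV
  have hT_surj : Function.Surjective ((T.restrictₗ K).domRestrict V) :=
    (injective_iff_surjective_of_finrank_eq_finrank (by simp [hdim])).mp hT_inj
  have hS_surj : Function.Surjective ((S.restrictₗ K).domRestrict V) := by
    have : (S.restrictₗ K).domRestrict V =
        (funLeft K K (Set.inclusion hST)).comp ((T.restrictₗ K).domRestrict V) := rfl
    rw [this]
    exact (funLeft_surjective_of_injective K K _ (Set.inclusion_injective hST)).comp hT_surj
  have := finrank_range_add_finrank_ker ((S.restrictₗ K).domRestrict V)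
  rw [range_eq_top.mpr hS_surj, finrank_top, finrank_fintype_fun_eq_card, Fintype.card_coe,
    ker_domRestrict, ← Submodule.finrank_map_subtype_eq, Submodule.map_comap_subtype] at this
  omega

theorem rank_add_diagonal_of_saturated_general (n k m : ℕ)
    (P G : Matrix (Fin n) (Fin n) ℂ)
    (hP : P.PosSemidef) (hrankP : P.rank = k)
    (hsat : ∀ s : Finset (Fin n), s.card = k →
      (P.submatrix (fun x : s => (x : Fin n)) (fun x : s => (x : Fin n))).PosDef)
    (hGdiag : G.IsDiag) (hG : G.PosSemidef) (hrankG : G.rank = m) (hm : m < n - k) :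
    (P + G).rank = k + m := by
  classical
  set S := univ.filter (G.diag · ≠ 0)
  have hS : #S = m := by
    rw [← hrankG, ← hGdiag.diagonal_diag, Matrix.rank_diagonal, Fintype.card_subtype]
  have hkerG : ker G.mulVecLin = ker (S.restrictₗ ℂ) := by
    rw [← hGdiag.diagonal_diag, ker_diagonal_mulVecLin]
  have hkerP : finrank ℂ (ker P.mulVecLin) = n - k := by
    have := P.rank_add_finrank_ker_mulVecLin
    rw [Fintype.card_fin] at this
    omega
  obtain ⟨T, hST, hT⟩ := exists_superset_card_eq (s := S) (n := n - k) (by omega) (by simp)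
  have hTc : #Tᶜ = k := by rw [card_compl, hT, Fintype.card_fin]; omega
  have hdisj :=
    disjoint_ker_mulVecLin_ker_restrictₗ (by simpa only [compl_compl] using hsat Tᶜ hTc)
  have hdim := (ker P.mulVecLin).finrank_inf_ker_restrictₗ_add_card hST hdisj (by rw [hkerP, hT])
  have hPG := (P + G).rank_add_finrank_ker_mulVecLin
  rw [hP.ker_add hG, hkerG, Fintype.card_fin] at hPG
  omega

theorem rank_add_diagonal_of_saturated (n k m : ℕ)
    (P G : Matrix (Fin n) (Fin n) ℂ)
    (hP : P.PosSemidef) (hrankP : P.rank = k) (hkn : k < n)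
    (hsat : ∀ s : Finset (Fin n), s.card = k →
      (P.submatrix (fun x : s => (x : Fin n)) (fun x : s => (x : Fin n))).PosDef)
    (hGdiag : G.IsDiag) (hG : G.PosSemidef) (hrankG : G.rank = m) (hm : m < n - k) :
    (P + G).rank = k + m :=
  rank_add_diagonal_of_saturated_general n k m P G hP hrankP hsat hGdiag hG hrankG hm
end

section
/- Let T = diag(t₁,…,t_{n-1}) with distinct unimodular t_i, let E, M be the column vectors with entries 1 and w_i (|w_i|=1) respectively, let P be an invertible Hermitian matrix satisfying P - T·P·T* = E·E* - M·M*, let t_n be a unimodular point distinct from all t_i, and define X = (I - t_n·T*)·P⁻¹·(t_n·I - T)⁻¹·E and Y = (I - t_n·T*)·P⁻¹·(t_n·I - T)⁻¹·M. Then P⁻¹ - T*·P⁻¹·T = X·X* - Y·Y*. -/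
/-!
Put `A = z • 1 - T` and `B = 1 - z • Tᴴ`. Since `Tᴴ * T = 1` and `star z * z = 1`, we have
`B = -(Tᴴ * A)`, `Bᴴ = star z • A`, `Aᴴ = -(star z • (Tᴴ * A))`, and `A⁻¹` commutes with `T`.
Writing `T = z • 1 - A` turns the Stein operator into a commutator:
`A⁻¹ * (P - T * P * Tᴴ) * A⁻¹ᴴ = z • (A⁻¹ * P - P * A⁻¹)`.
Conjugating by `P⁻¹` gives `z • (P⁻¹ * A⁻¹ - A⁻¹ * P⁻¹)`, and conjugating by `B` turns this back
into `-Tᴴ * (A * P⁻¹ - P⁻¹ * A) = P⁻¹ - Tᴴ * P⁻¹ * T`. Finally `X * Xᴴ - Y * Yᴴ` is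
`Z * (E * Eᴴ - M * Mᴴ) * Zᴴ` with `Z = B * P⁻¹ * A⁻¹`.
-/

open Matrix

namespace Matrix

variable {n R : Type*} [Fintype n] [DecidableEq n] [CommRing R]

theorem commute_nonsing_inv_right {A B : Matrix n n R} (h : Commute A B) : Commute A B⁻¹ := by
  by_cases hB : IsUnit B.det
  · calc A * B⁻¹ = B⁻¹ * (B * A) * B⁻¹ := by
          rw [← Matrix.mul_assoc, nonsing_inv_mul _ hB, Matrix.one_mul]
      _ = B⁻¹ * A := by
          rw [← h.eq, Matrix.mul_assoc, Matrix.mul_assoc, mul_nonsing_inv _ hB, Matrix.mul_one]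
  · simp [nonsing_inv_apply_not_isUnit _ hB]

variable [StarRing R]

section Stein

variable {z : R} {T : Matrix n n R}

theorem conjTranspose_smul_one_sub (hz : star z * z = 1) (hT : Tᴴ * T = 1) :
    (z • 1 - T)ᴴ = -(star z • (Tᴴ * (z • 1 - T))) := by
  rw [conjTranspose_sub, conjTranspose_smul, conjTranspose_one, Matrix.mul_sub, Matrix.mul_smul,
    Matrix.mul_one, hT, smul_sub, smul_smul, hz]
  module

theorem conjTranspose_inv_smul_one_sub (hz : star z * z = 1) (hT : Tᴴ * T = 1)
    (hA : IsUnit (z • 1 - T).det) :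
    (z • 1 - T)⁻¹ᴴ = -(z • ((z • 1 - T)⁻¹ * T)) := by
  rw [conjTranspose_nonsing_inv]
  refine inv_eq_right_inv ?_
  rw [conjTranspose_smul_one_sub hz hT, neg_mul_neg, smul_mul_smul, hz, one_smul,
    Matrix.mul_assoc, ← Matrix.mul_assoc _ _ T, mul_nonsing_inv _ hA, Matrix.one_mul, hT]

theorem inv_mul_sub_mul_mul_conjTranspose_inv (hz : star z * z = 1) (hT : Tᴴ * T = 1)
    (hA : IsUnit (z • 1 - T).det) (P : Matrix n n R) :
    (z • 1 - T)⁻¹ * (P - T * P * Tᴴ) * (z • 1 - T)⁻¹ᴴ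
      = z • ((z • 1 - T)⁻¹ * P - P * (z • 1 - T)⁻¹) := by
  set A := z • 1 - T
  have hTA : Commute T A⁻¹ :=
    commute_nonsing_inv_right (((Commute.one_right T).smul_right z).sub_right (Commute.refl T))
  have hTKT : Tᴴ * A⁻¹ * T = A⁻¹ := by
    rw [Matrix.mul_assoc, ← hTA.eq, ← Matrix.mul_assoc, hT, Matrix.one_mul]
  have hT' : T = z • 1 - A := (sub_sub_cancel _ _).symm
  have hKH : A⁻¹ᴴ = -(z • (A⁻¹ * T)) := conjTranspose_inv_smul_one_sub hz hT hA
  calc A⁻¹ * (P - T * P * Tᴴ) * A⁻¹ᴴ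
      = -z • (A⁻¹ * P * A⁻¹ * T - T * (A⁻¹ * P * A⁻¹)) := by
        have hconj : A⁻¹ * (T * P * Tᴴ) * (A⁻¹ * T) = T * (A⁻¹ * P * A⁻¹) :=
          calc A⁻¹ * (T * P * Tᴴ) * (A⁻¹ * T) = (A⁻¹ * T) * P * (Tᴴ * A⁻¹ * T) := by
                simp only [Matrix.mul_assoc]
            _ = T * (A⁻¹ * P * A⁻¹) := by
                rw [hTKT, ← hTA.eq]
                simp only [Matrix.mul_assoc]
        rw [hKH, Matrix.mul_sub, Matrix.sub_mul]
        simp only [Matrix.mul_neg, Matrix.mul_smul, hconj]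
        simp only [Matrix.mul_assoc]
        module
    _ = z • (A⁻¹ * P - P * A⁻¹) := by
        rw [hT']
        simp only [Matrix.mul_sub, Matrix.sub_mul, Matrix.mul_smul, Matrix.smul_mul,
          Matrix.mul_one, Matrix.one_mul, Matrix.mul_assoc, mul_nonsing_inv_cancel_left _ _ hA,
          nonsing_inv_mul _ hA]
        module

theorem one_sub_smul_conjTranspose_mul_mul_conjTranspose (hz : star z * z = 1)
    (hT : Tᴴ * T = 1) (hA : IsUnit (z • 1 - T).det) (Q : Matrix n n R) :
    (1 - z • Tᴴ) * (z • (Q * (z • 1 - T)⁻¹ - (z • 1 - T)⁻¹ * Q)) * (1 - z • Tᴴ)ᴴ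
      = Q - Tᴴ * Q * T := by
  set A := z • 1 - T with hA_def
  have hB : 1 - z • Tᴴ = -(Tᴴ * A) := by
    rw [hA_def, Matrix.mul_sub, Matrix.mul_smul, Matrix.mul_one, hT]
    module
  have hBH : (1 - z • Tᴴ)ᴴ = star z • A := by
    rw [conjTranspose_sub, conjTranspose_smul, conjTranspose_one, conjTranspose_conjTranspose,
      hA_def, smul_sub, smul_smul, hz, one_smul]
  rw [hBH, hB]
  simp only [Matrix.neg_mul, Matrix.mul_smul, Matrix.smul_mul, Matrix.mul_sub, Matrix.sub_mul,
    Matrix.mul_assoc, nonsing_inv_mul_cancel_right _ _ hA, mul_nonsing_inv_cancel_left _ _ hA,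
    smul_smul]
  rw [hz, one_smul, hA_def]
  simp only [Matrix.mul_sub, Matrix.sub_mul, Matrix.mul_smul, Matrix.smul_mul, Matrix.mul_one,
    Matrix.one_mul, ← Matrix.mul_assoc, hT]
  module

theorem inv_sub_conjTranspose_mul_inv_mul_eq (hz : star z * z = 1) (hT : Tᴴ * T = 1)
    (hA : IsUnit (z • 1 - T).det) {P : Matrix n n R} (hP : P.IsHermitian) (hPdet : IsUnit P.det) :
    P⁻¹ - Tᴴ * P⁻¹ * T
      = (1 - z • Tᴴ) * P⁻¹ * (z • 1 - T)⁻¹ * (P - T * P * Tᴴ)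
          * ((1 - z • Tᴴ) * P⁻¹ * (z • 1 - T)⁻¹)ᴴ := by
  set A := z • 1 - T
  set B := 1 - z • Tᴴ
  have hcomm : P⁻¹ * (z • (A⁻¹ * P - P * A⁻¹)) * P⁻¹ = z • (P⁻¹ * A⁻¹ - A⁻¹ * P⁻¹) := by
    simp only [Matrix.mul_sub, Matrix.sub_mul, Matrix.mul_smul, Matrix.smul_mul, Matrix.mul_assoc,
      nonsing_inv_mul_cancel_left _ _ hPdet, mul_nonsing_inv _ hPdet, Matrix.mul_one]
  symm
  calc B * P⁻¹ * A⁻¹ * (P - T * P * Tᴴ) * (B * P⁻¹ * A⁻¹)ᴴ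
      = B * (P⁻¹ * (A⁻¹ * (P - T * P * Tᴴ) * A⁻¹ᴴ) * P⁻¹) * Bᴴ := by
        simp only [conjTranspose_mul, hP.inv.eq, Matrix.mul_assoc]
    _ = P⁻¹ - Tᴴ * P⁻¹ * T := by
        rw [inv_mul_sub_mul_mul_conjTranspose_inv hz hT hA, hcomm,
          one_sub_smul_conjTranspose_mul_mul_conjTranspose hz hT hA]

end Stein

theorem conjTranspose_diagonal_mul_diagonal {d : n → R} (hd : ∀ i, star (d i) * d i = 1) :
    (diagonal d)ᴴ * diagonal d = 1 := by
  rw [diagonal_conjTranspose, diagonal_mul_diagonal, ← diagonal_one]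
  exact congrArg diagonal (funext hd)

theorem isUnit_det_smul_one_sub_diagonal {K : Type*} [Field K] {z : K} {d : n → K}
    (hd : ∀ i, z ≠ d i) : IsUnit (z • 1 - diagonal d).det := by
  rw [smul_one_eq_diagonal, diagonal_sub, det_diagonal, isUnit_iff_ne_zero,
    Finset.prod_ne_zero_iff]
  exact fun i _ => sub_ne_zero.mpr (hd i)

end Matrix

theorem RCLike.star_mul_self_of_norm_eq_one {𝕜 : Type*} [RCLike 𝕜] {z : 𝕜} (hz : ‖z‖ = 1) :
    star z * z = 1 := by
  rw [RCLike.star_def, RCLike.conj_mul, hz]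
  simp

theorem inverse_stein_identity_general (m : ℕ) (t : Fin m → ℂ) (tN : ℂ)
    (ht : ∀ i, ‖t i‖ = 1)
    (htN : ‖tN‖ = 1) (htNt : ∀ i, tN ≠ t i)
    (T : Matrix (Fin m) (Fin m) ℂ) (hT : T = Matrix.diagonal t)
    (E M : Matrix (Fin m) (Fin 1) ℂ)
    (P : Matrix (Fin m) (Fin m) ℂ) (hPH : P.IsHermitian) (hPinv : IsUnit P.det)
    (hStein : P - T * P * Tᴴ = E * Eᴴ - M * Mᴴ)
    (X Y : Matrix (Fin m) (Fin 1) ℂ)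
    (hX : X = (1 - tN • Tᴴ) * P⁻¹ * (tN • (1 : Matrix (Fin m) (Fin m) ℂ) - T)⁻¹ * E)
    (hY : Y = (1 - tN • Tᴴ) * P⁻¹ * (tN • (1 : Matrix (Fin m) (Fin m) ℂ) - T)⁻¹ * M) :
    P⁻¹ - Tᴴ * P⁻¹ * T = X * Xᴴ - Y * Yᴴ := by
  have hTunit : Tᴴ * T = 1 := hT ▸
    conjTranspose_diagonal_mul_diagonal fun i => RCLike.star_mul_self_of_norm_eq_one (ht i)
  have hA : IsUnit (tN • 1 - T).det := hT ▸ isUnit_det_smul_one_sub_diagonal htNt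
  rw [inv_sub_conjTranspose_mul_inv_mul_eq (RCLike.star_mul_self_of_norm_eq_one htN) hTunit hA
    hPH hPinv, hStein, hX, hY]
  set Z := (1 - tN • Tᴴ) * P⁻¹ * (tN • 1 - T)⁻¹
  simp only [conjTranspose_mul, Matrix.mul_sub, Matrix.sub_mul, Matrix.mul_assoc]

theorem inverse_stein_identity (m : ℕ) (t : Fin m → ℂ) (w : Fin m → ℂ) (tN : ℂ)
    (ht : ∀ i, ‖t i‖ = 1) (hw : ∀ i, ‖w i‖ = 1)
    (htinj : Function.Injective t)
    (htN : ‖tN‖ = 1) (htNt : ∀ i, tN ≠ t i)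
    (T : Matrix (Fin m) (Fin m) ℂ) (hT : T = Matrix.diagonal t)
    (E M : Matrix (Fin m) (Fin 1) ℂ)
    (hE : E = Matrix.of fun _ _ => (1 : ℂ))
    (hM : M = Matrix.of fun i _ => w i)
    (P : Matrix (Fin m) (Fin m) ℂ) (hPH : P.IsHermitian) (hPinv : IsUnit P.det)
    (hStein : P - T * P * Tᴴ = E * Eᴴ - M * Mᴴ)
    (X Y : Matrix (Fin m) (Fin 1) ℂ)
    (hX : X = (1 - tN • Tᴴ) * P⁻¹ * (tN • (1 : Matrix (Fin m) (Fin m) ℂ) - T)⁻¹ * E)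
    (hY : Y = (1 - tN • Tᴴ) * P⁻¹ * (tN • (1 : Matrix (Fin m) (Fin m) ℂ) - T)⁻¹ * M) :
    P⁻¹ - Tᴴ * P⁻¹ * T = X * Xᴴ - Y * Yᴴ :=
  inverse_stein_identity_general m t tN ht htN htNt T hT E M P hPH hPinv hStein X Y hX hY
end

section
/- Let T = diag(t₁,…,t_{n-1}) with distinct unimodular nonzero t_i, E and M column vectors with E the all-ones vector and M having unimodular entries, P an invertible Hermitian matrix satisfying P - T·P·T* = E·E* - M·M*, t_n a unimodular point distinct from all t_i, and define the 2×2 matrix function Θ(z) = I₂ + (z - t_n)·[E*; M*]·(I - z·T*)⁻¹·P⁻¹·(t_n·I - T)⁻¹·[E, -M]. Then for all z, ζ with z·conj(ζ) ≠ 1 and z, ζ avoiding the poles, (J - Θ(z)·J·Θ(ζ)*)/(1 - z·conj(ζ)) = [E*; M*]·(I - z·T*)⁻¹·P⁻¹·(I - conj(ζ)·T)⁻¹·[E, M], where J = diag(1, -1). -/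
/-!
With `L(z) = (I - z T*)⁻¹`, `R(ζ) = (I - ζ̄ T)⁻¹`, `D = t I - T` and `[E, -M] = A* J`, the relations
`J² = I`, `J* = J`, `P* = P` and the Stein identity `P - T P T* = A* J A` expand
`J - Θ(z) J Θ(ζ)*` to `-A X A*`, where `X` is a combination of `L P⁻¹ D⁻¹`, `D*⁻¹ P⁻¹ R` and
`L P⁻¹ D⁻¹ (P - T P T*) D*⁻¹ P⁻¹ R`. Multiplying `X + (1 - z ζ̄) L P⁻¹ R` by `D P L⁻¹` on the left
and `R⁻¹ P D*` on the right cancels every inverse, and what remains is a polynomial identity in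
`T`, `T*`, `P` that holds because `t t̄ = 1`.
-/

open Matrix Complex ComplexConjugate

section ThetaKernel

variable {K : Type*} [Field K] [StarRing K] {n p : Type*} [Fintype n] [DecidableEq n]
  [Fintype p] [DecidableEq p]

theorem stein_polynomial_identity (P T : Matrix n n K) {t : K} (ht : t * star t = 1) (z w : K) :
    (z - t) • ((1 - w • T) * P * (t • 1 - T)ᴴ) + (w - star t) • ((t • 1 - T) * P * (1 - z • Tᴴ))
      + ((z - t) * (w - star t)) • (P - T * P * Tᴴ)
      + (1 - z * w) • ((t • 1 - T) * P * (t • 1 - T)ᴴ) = 0 := by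
  simp only [conjTranspose_sub, conjTranspose_smul, conjTranspose_one, sub_mul, mul_sub,
    smul_mul_assoc, mul_smul_comm, one_mul, mul_one, Matrix.mul_assoc]
  linear_combination (norm := module)
    ht • (z • (P * Tᴴ) + w • (T * P) - (z * w) • P - T * (P * Tᴴ))

theorem stein_resolvent_identity {P T : Matrix n n K} {t z w : K} (ht : t * star t = 1)
    (hP : IsUnit P.det) (hD : IsUnit (t • 1 - T).det) (hz : IsUnit (1 - z • Tᴴ).det)
    (hw : IsUnit (1 - w • T).det) :
    (z - t) • ((1 - z • Tᴴ)⁻¹ * P⁻¹ * (t • 1 - T)⁻¹)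
      + (w - star t) • ((t • 1 - T)ᴴ⁻¹ * P⁻¹ * (1 - w • T)⁻¹)
      + ((z - t) * (w - star t)) • ((1 - z • Tᴴ)⁻¹ * P⁻¹ * (t • 1 - T)⁻¹ * (P - T * P * Tᴴ)
          * (t • 1 - T)ᴴ⁻¹ * P⁻¹ * (1 - w • T)⁻¹)
      = -(1 - z * w) • ((1 - z • Tᴴ)⁻¹ * P⁻¹ * (1 - w • T)⁻¹) := by
  have hDH : IsUnit (t • 1 - T)ᴴ.det := by rw [det_conjTranspose]; exact hD.star
  have hU : IsUnit ((t • 1 - T) * P * (1 - z • Tᴴ)).det := by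
    simp only [det_mul]; exact (hD.mul hP).mul hz
  have hV : IsUnit ((1 - w • T) * P * (t • 1 - T)ᴴ).det := by
    simp only [det_mul]; exact (hw.mul hP).mul hDH
  rw [neg_smul, ← sub_eq_zero, sub_neg_eq_add]
  refine ((isUnit_iff_isUnit_det _).2 hU).mul_right_eq_zero.mp
    (((isUnit_iff_isUnit_det _).2 hV).mul_left_eq_zero.mp ?_)
  rw [← stein_polynomial_identity P T ht z w]
  simp only [Matrix.add_mul, Matrix.mul_add, Matrix.smul_mul, Matrix.mul_smul,
    Matrix.mul_assoc, mul_nonsing_inv_cancel_left _ _ hz, mul_nonsing_inv_cancel_left _ _ hP,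
    mul_nonsing_inv_cancel_left _ _ hD, nonsing_inv_mul_cancel_left _ _ hw,
    nonsing_inv_mul_cancel_left _ _ hP, nonsing_inv_mul _ hDH, Matrix.mul_one]

variable (A : Matrix p n K) (J : Matrix p p K) (T P : Matrix n n K) (t : K)

noncomputable def theta (z : K) : Matrix p p K :=
  1 + (z - t) • (A * (1 - z • Tᴴ)⁻¹ * P⁻¹ * (t • 1 - T)⁻¹ * (Aᴴ * J))

variable {A J T P t}

theorem theta_conjTranspose (hJ : Jᴴ = J) (hP : P.IsHermitian) (ζ : K) :
    (theta A J T P t ζ)ᴴ = 1 + (star ζ - star t) •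
      (J * A * (t • 1 - T)ᴴ⁻¹ * P⁻¹ * (1 - star ζ • T)⁻¹ * Aᴴ) := by
  simp only [theta, conjTranspose_add, conjTranspose_one, conjTranspose_smul, conjTranspose_mul,
    conjTranspose_nonsing_inv, conjTranspose_sub, conjTranspose_conjTranspose, hJ, hP.eq,
    star_sub, Matrix.mul_assoc]

theorem theta_mul_J_mul_theta_conjTranspose (hJ : Jᴴ = J) (hJJ : J * J = 1)
    (hP : P.IsHermitian) (z ζ : K) :
    theta A J T P t z * J * (theta A J T P t ζ)ᴴ
      = J + A * ((z - t) • ((1 - z • Tᴴ)⁻¹ * P⁻¹ * (t • 1 - T)⁻¹)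
      + (star ζ - star t) • ((t • 1 - T)ᴴ⁻¹ * P⁻¹ * (1 - star ζ • T)⁻¹)
      + ((z - t) * (star ζ - star t)) • ((1 - z • Tᴴ)⁻¹ * P⁻¹ * (t • 1 - T)⁻¹ * (Aᴴ * J * A)
          * (t • 1 - T)ᴴ⁻¹ * P⁻¹ * (1 - star ζ • T)⁻¹)) * Aᴴ := by
  have hJJ' (X : Matrix p p K) : J * (J * X) = X := by
    rw [← Matrix.mul_assoc, hJJ, Matrix.one_mul]
  rw [theta_conjTranspose hJ hP, theta]
  simp only [Matrix.add_mul, Matrix.mul_add, Matrix.smul_mul, Matrix.mul_smul, Matrix.one_mul,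
    Matrix.mul_one, Matrix.mul_assoc, hJJ, hJJ']
  module

theorem J_sub_theta_mul_J_mul_theta_conjTranspose (hJ : Jᴴ = J) (hJJ : J * J = 1)
    (hP : P.IsHermitian) (hPdet : IsUnit P.det) (hStein : P - T * P * Tᴴ = Aᴴ * J * A)
    (ht : t * star t = 1) (hD : IsUnit (t • 1 - T).det) {z ζ : K} (hz : IsUnit (1 - z • Tᴴ).det)
    (hζ : IsUnit (1 - star ζ • T).det) :
    J - theta A J T P t z * J * (theta A J T P t ζ)ᴴ
      = (1 - z * star ζ) • (A * (1 - z • Tᴴ)⁻¹ * P⁻¹ * (1 - star ζ • T)⁻¹ * Aᴴ) := by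
  rw [theta_mul_J_mul_theta_conjTranspose hJ hJJ hP, ← hStein,
    stein_resolvent_identity ht hPdet hD hz hζ]
  simp only [Matrix.smul_mul, Matrix.mul_smul, Matrix.mul_assoc]
  module

end ThetaKernel

theorem theta_J_identity_general (m : ℕ) (t : Fin m → ℂ) (w : Fin m → ℂ) (tN : ℂ)
    (htN : ‖tN‖ = 1) (htNt : ∀ i, tN ≠ t i)
    (T : Matrix (Fin m) (Fin m) ℂ) (hT : T = Matrix.diagonal t)
    (A : Matrix (Fin 2) (Fin m) ℂ)
    (hA : A = Matrix.of fun p j => if p = 0 then (1 : ℂ) else conj (w j))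
    (B C : Matrix (Fin m) (Fin 2) ℂ)
    (hB : B = Matrix.of fun j p => if p = 0 then (1 : ℂ) else -(w j))
    (hC : C = Matrix.of fun j p => if p = 0 then (1 : ℂ) else w j)
    (E M : Matrix (Fin m) (Fin 1) ℂ)
    (hE : E = Matrix.of fun _ _ => (1 : ℂ))
    (hM : M = Matrix.of fun i _ => w i)
    (P : Matrix (Fin m) (Fin m) ℂ) (hPH : P.IsHermitian) (hPinv : IsUnit P.det)
    (hStein : P - T * P * Tᴴ = E * Eᴴ - M * Mᴴ)
    (Θ : ℂ → Matrix (Fin 2) (Fin 2) ℂ)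
    (hΘ : ∀ z, Θ z = 1 + (z - tN) •
      (A * (1 - z • Tᴴ)⁻¹ * P⁻¹ * (tN • (1 : Matrix (Fin m) (Fin m) ℂ) - T)⁻¹ * B))
    (J : Matrix (Fin 2) (Fin 2) ℂ) (hJ : J = Matrix.diagonal ![1, -1])
    (z ζ : ℂ) (hzζ : z * conj ζ ≠ 1)
    (hz : IsUnit (1 - z • Tᴴ).det)
    (hζ' : IsUnit (1 - conj ζ • T).det) :
    (1 - z * conj ζ)⁻¹ • (J - Θ z * J * (Θ ζ)ᴴ)
      = A * (1 - z • Tᴴ)⁻¹ * P⁻¹ * (1 - conj ζ • T)⁻¹ * C := by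
  have hJH : Jᴴ = J := by
    rw [hJ, diagonal_conjTranspose]; congr 1; ext i; fin_cases i <;> simp
  have hJJ : J * J = 1 := by
    rw [hJ, diagonal_mul_diagonal, ← diagonal_one]; congr 1; ext i; fin_cases i <;> simp
  have hBA : B = Aᴴ * J := by
    subst hA hB hJ; ext j p; fin_cases p <;> simp
  have hCA : C = Aᴴ := by
    subst hA hC; ext j p; fin_cases p <;> simp
  have hStein' : P - T * P * Tᴴ = Aᴴ * J * A := by
    rw [hStein]; subst hA hJ hE hM
    ext i j; simp [Matrix.mul_apply, Fin.sum_univ_two, sub_eq_add_neg]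
  have htN' : tN * star tN = 1 := by
    rw [← starRingEnd_apply, Complex.mul_conj, Complex.normSq_eq_norm_sq, htN]; norm_num
  have hD : IsUnit (tN • (1 : Matrix (Fin m) (Fin m) ℂ) - T).det := by
    rw [hT, smul_one_eq_diagonal, diagonal_sub, det_diagonal, isUnit_iff_ne_zero,
      Finset.prod_ne_zero_iff]
    exact fun i _ => sub_ne_zero.2 (htNt i)
  have hΘ' : Θ = theta A J T P tN := funext fun z => by rw [hΘ, hBA, theta]
  simp only [starRingEnd_apply] at hzζ hζ' ⊢
  rw [hΘ', J_sub_theta_mul_J_mul_theta_conjTranspose hJH hJJ hPH hPinv hStein' htN' hD hz hζ',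
    smul_smul, inv_mul_cancel₀ (sub_ne_zero.2 (Ne.symm hzζ)), one_smul, hCA]

theorem theta_J_identity (m : ℕ) (t : Fin m → ℂ) (w : Fin m → ℂ) (tN : ℂ)
    (ht : ∀ i, ‖t i‖ = 1) (hw : ∀ i, ‖w i‖ = 1)
    (htinj : Function.Injective t) (ht0 : ∀ i, t i ≠ 0)
    (htN : ‖tN‖ = 1) (htNt : ∀ i, tN ≠ t i)
    (T : Matrix (Fin m) (Fin m) ℂ) (hT : T = Matrix.diagonal t)
    (A : Matrix (Fin 2) (Fin m) ℂ)
    (hA : A = Matrix.of fun p j => if p = 0 then (1 : ℂ) else conj (w j))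
    (B C : Matrix (Fin m) (Fin 2) ℂ)
    (hB : B = Matrix.of fun j p => if p = 0 then (1 : ℂ) else -(w j))
    (hC : C = Matrix.of fun j p => if p = 0 then (1 : ℂ) else w j)
    (E M : Matrix (Fin m) (Fin 1) ℂ)
    (hE : E = Matrix.of fun _ _ => (1 : ℂ))
    (hM : M = Matrix.of fun i _ => w i)
    (P : Matrix (Fin m) (Fin m) ℂ) (hPH : P.IsHermitian) (hPinv : IsUnit P.det)
    (hStein : P - T * P * Tᴴ = E * Eᴴ - M * Mᴴ)
    (Θ : ℂ → Matrix (Fin 2) (Fin 2) ℂ)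
    (hΘ : ∀ z, Θ z = 1 + (z - tN) •
      (A * (1 - z • Tᴴ)⁻¹ * P⁻¹ * (tN • (1 : Matrix (Fin m) (Fin m) ℂ) - T)⁻¹ * B))
    (J : Matrix (Fin 2) (Fin 2) ℂ) (hJ : J = Matrix.diagonal ![1, -1])
    (z ζ : ℂ) (hzζ : z * conj ζ ≠ 1)
    (hz : IsUnit (1 - z • Tᴴ).det) (hζ : IsUnit (1 - ζ • Tᴴ).det)
    (hζ' : IsUnit (1 - conj ζ • T).det) :
    (1 - z * conj ζ)⁻¹ • (J - Θ z * J * (Θ ζ)ᴴ)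
      = A * (1 - z • Tᴴ)⁻¹ * P⁻¹ * (1 - conj ζ • T)⁻¹ * C :=
  theta_J_identity_general m t w tN htN htNt T hT A hA B C hB hC E M hE hM P hPH hPinv hStein Θ hΘ J
    hJ z ζ hzζ hz hζ'
end

section
/- With the same setup (T = diag(t₁,…,t_{n-1}) distinct unimodular, P invertible Hermitian with P - T·P·T* = E·E* - M·M*, t_n unimodular distinct from the t_i, Θ(z) = I₂ + (z - t_n)·[E*; M*]·(I - z·T*)⁻¹·P⁻¹·(t_n·I - T)⁻¹·[E, -M]), the determinant of Θ(z) equals 1 for every z ∈ ℂ \ {t₁,…,t_{n-1}}. -/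
open Matrix Complex ComplexConjugate

/-!
By Sylvester's identity `det (1 + A X B) = det (1 + X B A)` the determinant of `Θ z` is an
`m × m` determinant, and the Stein equation turns `B A` into `P - T P Tᴴ`. Since
`(t_n - T) P (1 - z Tᴴ) + (z - t_n) (P - T P Tᴴ) = (z - T) P (1 - t_n Tᴴ)`, this gives
`det Θ(z) = det (z - T) det (1 - t_n Tᴴ) / (det (t_n - T) det (1 - z Tᴴ))`. For unitary `T`
one has `1 - u Tᴴ = -Tᴴ (u - T)`, and the quotient is `1`.
-/

namespace Matrix

variable {R n ι : Type*} [CommRing R] [Fintype n] [DecidableEq n]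

theorem smul_one_sub_mul_mul_one_sub_smul_add_smul (T S P : Matrix n n R) (z w : R) :
    (w • 1 - T) * P * (1 - z • S) + (z - w) • (P - T * P * S)
      = (z • 1 - T) * P * (1 - w • S) := by
  simp only [Matrix.sub_mul, Matrix.mul_sub, sub_smul, smul_sub, Matrix.mul_one,
    Matrix.one_mul, Matrix.smul_mul, Matrix.mul_smul, smul_smul, Matrix.mul_assoc]
  module

theorem det_one_add_smul_mul_inv_mul_det [Fintype ι] [DecidableEq ι]
    (A : Matrix ι n R) (B : Matrix n ι R) (T S P : Matrix n n R) (z w : R)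
    (hBA : B * A = P - T * P * S) (hP : IsUnit P.det)
    (hw : IsUnit (w • 1 - T).det) (hz : IsUnit (1 - z • S).det) :
    (1 + (z - w) • (A * (1 - z • S)⁻¹ * P⁻¹ * (w • 1 - T)⁻¹ * B)).det
        * ((w • 1 - T).det * P.det * (1 - z • S).det)
      = (z • 1 - T).det * P.det * (1 - w • S).det := by
  set X := (1 - z • S)⁻¹ * P⁻¹ * (w • 1 - T)⁻¹
  set D := (w • 1 - T) * P * (1 - z • S)
  have hDX : D * X = 1 := by
    simp only [D, X, Matrix.mul_assoc, mul_nonsing_inv_cancel_left _ _ hz,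
      mul_nonsing_inv_cancel_left _ _ hP, mul_nonsing_inv _ hw]
  have hswap : (1 + (z - w) • (A * (1 - z • S)⁻¹ * P⁻¹ * (w • 1 - T)⁻¹ * B)).det
      = (1 + (z - w) • (X * B * A)).det := by
    rw [show A * (1 - z • S)⁻¹ * P⁻¹ * (w • 1 - T)⁻¹ * B = A * (X * B) by
      simp only [X, Matrix.mul_assoc], ← Matrix.mul_smul, det_one_add_mul_comm, Matrix.smul_mul]
  calc _ = (D * (1 + (z - w) • (X * B * A))).det := by
        rw [hswap, det_mul D, mul_comm]
        simp only [D, det_mul]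
    _ = (D + (z - w) • (P - T * P * S)).det := by
        rw [Matrix.mul_add, Matrix.mul_one, Matrix.mul_smul, Matrix.mul_assoc _ B A, hBA,
          ← Matrix.mul_assoc, hDX, Matrix.one_mul]
    _ = _ := by rw [smul_one_sub_mul_mul_one_sub_smul_add_smul, det_mul, det_mul]

theorem one_sub_smul_eq_neg_mul_of_mul_eq_one {S T : Matrix n n R} (hST : S * T = 1) (z : R) :
    1 - z • S = -S * (z • 1 - T) := by
  rw [Matrix.neg_mul, Matrix.mul_sub, Matrix.mul_smul, Matrix.mul_one, hST]
  abel

theorem isUnit_det_one_sub_smul_of_mul_eq_one {S T : Matrix n n R} (hST : S * T = 1) {z : R}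
    (hz : IsUnit (z • 1 - T).det) : IsUnit (1 - z • S).det := by
  rw [one_sub_smul_eq_neg_mul_of_mul_eq_one hST, det_mul]
  exact (isUnit_det_of_right_inverse (by rw [neg_mul_neg, hST])).mul hz

theorem det_smul_one_sub_mul_det_one_sub_smul_of_mul_eq_one {S T : Matrix n n R}
    (hST : S * T = 1) (z w : R) :
    (z • 1 - T).det * (1 - w • S).det = (1 - z • S).det * (w • 1 - T).det := by
  simp only [one_sub_smul_eq_neg_mul_of_mul_eq_one hST, det_mul]
  ring

theorem det_smul_one_sub_diagonal (t : n → R) (z : R) :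
    (z • 1 - diagonal t).det = ∏ i, (z - t i) := by
  rw [smul_one_eq_diagonal, diagonal_sub, det_diagonal]

theorem conjTranspose_diagonal_mul_self_of_norm_eq_one {t : n → ℂ} (ht : ∀ i, ‖t i‖ = 1) :
    (diagonal t)ᴴ * diagonal t = 1 := by
  rw [diagonal_conjTranspose, diagonal_mul_diagonal, ← diagonal_one]
  congr 1
  ext i
  simp [Complex.conj_mul', ht i]

end Matrix

theorem det_theta_eq_one_general (m : ℕ) (t : Fin m → ℂ) (w : Fin m → ℂ) (tN : ℂ)
    (ht : ∀ i, ‖t i‖ = 1)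
    (htNt : ∀ i, tN ≠ t i)
    (T : Matrix (Fin m) (Fin m) ℂ) (hT : T = Matrix.diagonal t)
    (A : Matrix (Fin 2) (Fin m) ℂ)
    (hA : A = Matrix.of fun p j => if p = 0 then (1 : ℂ) else conj (w j))
    (B : Matrix (Fin m) (Fin 2) ℂ)
    (hB : B = Matrix.of fun j p => if p = 0 then (1 : ℂ) else -(w j))
    (E M : Matrix (Fin m) (Fin 1) ℂ)
    (hE : E = Matrix.of fun _ _ => (1 : ℂ))
    (hM : M = Matrix.of fun i _ => w i)
    (P : Matrix (Fin m) (Fin m) ℂ) (hPinv : IsUnit P.det)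
    (hStein : P - T * P * Tᴴ = E * Eᴴ - M * Mᴴ)
    (Θ : ℂ → Matrix (Fin 2) (Fin 2) ℂ)
    (hΘ : ∀ z, Θ z = 1 + (z - tN) •
      (A * (1 - z • Tᴴ)⁻¹ * P⁻¹ * (tN • (1 : Matrix (Fin m) (Fin m) ℂ) - T)⁻¹ * B))
    (z : ℂ) (hz : ∀ i, z ≠ t i) :
    (Θ z).det = 1 := by
  have hBA : B * A = P - T * P * Tᴴ := by
    rw [hStein, hA, hB, hE, hM]
    ext j k
    simp [Matrix.mul_apply, Fin.sum_univ_two, sub_eq_add_neg]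
  have hunitary : Tᴴ * T = 1 := hT ▸ conjTranspose_diagonal_mul_self_of_norm_eq_one ht
  have hres (u : ℂ) (hu : ∀ i, u ≠ t i) : IsUnit (u • 1 - T).det := by
    rw [hT, det_smul_one_sub_diagonal, isUnit_iff_ne_zero]
    exact Finset.prod_ne_zero_iff.mpr fun i _ => sub_ne_zero.mpr (hu i)
  have hzS := isUnit_det_one_sub_smul_of_mul_eq_one hunitary (hres z hz)
  have hdet := det_one_add_smul_mul_inv_mul_det A B T Tᴴ P z tN hBA hPinv (hres tN htNt) hzS
  rw [← hΘ] at hdet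
  have hne : (tN • 1 - T).det * P.det * (1 - z • Tᴴ).det ≠ 0 :=
    (((hres tN htNt).mul hPinv).mul hzS).ne_zero
  refine (mul_eq_right₀ hne).mp (hdet.trans ?_)
  linear_combination P.det * det_smul_one_sub_mul_det_one_sub_smul_of_mul_eq_one hunitary z tN

theorem det_theta_eq_one (m : ℕ) (t : Fin m → ℂ) (w : Fin m → ℂ) (tN : ℂ)
    (ht : ∀ i, ‖t i‖ = 1) (hw : ∀ i, ‖w i‖ = 1)
    (htinj : Function.Injective t)
    (htN : ‖tN‖ = 1) (htNt : ∀ i, tN ≠ t i)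
    (T : Matrix (Fin m) (Fin m) ℂ) (hT : T = Matrix.diagonal t)
    (A : Matrix (Fin 2) (Fin m) ℂ)
    (hA : A = Matrix.of fun p j => if p = 0 then (1 : ℂ) else conj (w j))
    (B : Matrix (Fin m) (Fin 2) ℂ)
    (hB : B = Matrix.of fun j p => if p = 0 then (1 : ℂ) else -(w j))
    (E M : Matrix (Fin m) (Fin 1) ℂ)
    (hE : E = Matrix.of fun _ _ => (1 : ℂ))
    (hM : M = Matrix.of fun i _ => w i)
    (P : Matrix (Fin m) (Fin m) ℂ) (hPH : P.IsHermitian) (hPinv : IsUnit P.det)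
    (hStein : P - T * P * Tᴴ = E * Eᴴ - M * Mᴴ)
    (Θ : ℂ → Matrix (Fin 2) (Fin 2) ℂ)
    (hΘ : ∀ z, Θ z = 1 + (z - tN) •
      (A * (1 - z • Tᴴ)⁻¹ * P⁻¹ * (tN • (1 : Matrix (Fin m) (Fin m) ℂ) - T)⁻¹ * B))
    (z : ℂ) (hz : ∀ i, z ≠ t i) :
    (Θ z).det = 1 :=
  det_theta_eq_one_general m t w tN ht htNt T hT A hA B hB E M hE hM P hPinv hStein Θ hΘ z hz
end

section
/- Let f be a finite Blaschke product, i.e., f(z) = c·∏_{i=1}^{k}(z - a_i)/(1 - z·conj(a_i)) with |c| = 1 and |a_i| < 1 for all i. Then for every point t on the unit circle, t·f'(t)·conj(f(t)) = |f'(t)|, and this quantity equals the limit as z → t of (1 - |f(z)|²)/(1 - |z|²). -/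
open Complex ComplexConjugate Topology Filter

/-!
On the unit circle every factor `b_a z = (z - a) / (1 - z ā)` is unimodular, so
`conj (f t) = (f t)⁻¹` and `t f'(t) conj (f t)` is `t` times the logarithmic derivative of `f`:
the sum over the factors of `t b_a'(t) / b_a(t) = (1 - |a|²) / |t - a|² ≥ 0`, whose modulus is
therefore `|f'(t)|`.
For the limit, `1 - |b_a z|² = (1 - |z|²) (1 - |a|²) / |1 - z ā|²`, and the identity
`1 - |g h|² = (1 - |g|²) + |g|² (1 - |h|²)` makes `(1 - |f z|²) / (1 - |z|²)` additive over
factors tending to the unit circle, so it tends to the same sum.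
-/

noncomputable def blaschkeFactor (a z : ℂ) : ℂ := (z - a) / (1 - z * conj a)

/-- On the unit circle this is the Poisson kernel `(1 - ‖a‖²) / ‖z - a‖²`. -/
noncomputable def blaschkeKernel (a z : ℂ) : ℝ := (1 - ‖a‖ ^ 2) / ‖1 - z * conj a‖ ^ 2

theorem sq_norm_one_sub_mul_conj_sub_sq_norm_sub (z w : ℂ) :
    ‖1 - z * conj w‖ ^ 2 - ‖z - w‖ ^ 2 = (1 - ‖z‖ ^ 2) * (1 - ‖w‖ ^ 2) := by
  simp only [Complex.sq_norm, normSq_apply, sub_re, sub_im, mul_re, mul_im, conj_re, conj_im,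
    one_re, one_im]
  ring

theorem one_sub_mul_conj_eq_mul_conj_sub {t : ℂ} (ht : ‖t‖ = 1) (a : ℂ) :
    1 - t * conj a = t * conj (t - a) := by
  rw [map_sub, mul_sub, mul_conj, normSq_eq_norm_sq, ht]
  norm_num

theorem norm_one_sub_mul_conj {t : ℂ} (ht : ‖t‖ = 1) (a : ℂ) :
    ‖1 - t * conj a‖ = ‖t - a‖ := by
  rw [one_sub_mul_conj_eq_mul_conj_sub ht, norm_mul, ht, norm_conj, one_mul]

theorem one_sub_mul_conj_ne_zero {t a : ℂ} (ht : ‖t‖ = 1) (hta : t ≠ a) :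
    1 - t * conj a ≠ 0 := by
  rw [← norm_ne_zero_iff, norm_one_sub_mul_conj ht, norm_ne_zero_iff, sub_ne_zero]
  exact hta

theorem hasDerivAt_blaschkeFactor {a z : ℂ} (h : 1 - z * conj a ≠ 0) :
    HasDerivAt (blaschkeFactor a) (((1 - ‖a‖ ^ 2 : ℝ) : ℂ) / (1 - z * conj a) ^ 2) z := by
  have hnum : HasDerivAt (fun z => z - a) 1 z := (hasDerivAt_id z).sub_const a
  have hden : HasDerivAt (fun z => 1 - z * conj a) (-conj a) z := by
    simpa using ((hasDerivAt_id z).mul_const (conj a)).const_sub 1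
  refine (hnum.div hden h).congr_deriv ?_
  push_cast
  rw [← mul_conj']
  ring

theorem norm_blaschkeFactor_of_norm_eq_one {t a : ℂ} (ht : ‖t‖ = 1) (hta : t ≠ a) :
    ‖blaschkeFactor a t‖ = 1 := by
  rw [blaschkeFactor, norm_div, norm_one_sub_mul_conj ht, div_self]
  exact norm_ne_zero_iff.2 (sub_ne_zero.2 hta)

theorem mul_logDeriv_blaschkeFactor {t a : ℂ} (ht : ‖t‖ = 1) (hta : t ≠ a) :
    t * logDeriv (blaschkeFactor a) t = blaschkeKernel a t := by
  have h := one_sub_mul_conj_ne_zero ht hta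
  rw [logDeriv_apply, (hasDerivAt_blaschkeFactor h).deriv, blaschkeFactor, blaschkeKernel]
  have hN : t - a ≠ 0 := sub_ne_zero.2 hta
  have htt : t * conj t = 1 := by rw [mul_conj', ht]; norm_num
  have hD : conj (1 - t * conj a) = conj t * (t - a) := by
    rw [map_sub, map_one, map_mul, conj_conj, mul_sub, ← htt, mul_comm t]
  rw [ofReal_div, ofReal_pow, ← mul_conj', hD]
  have hct : conj t ≠ 0 := by rw [map_ne_zero]; rintro rfl; simp at ht
  field_simp
  rw [mul_right_comm, htt, one_mul]

theorem blaschkeKernel_nonneg {a : ℂ} (ha : ‖a‖ ≤ 1) (z : ℂ) :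
    0 ≤ blaschkeKernel a z := by
  unfold blaschkeKernel
  have : ‖a‖ ^ 2 ≤ 1 := pow_le_one₀ (norm_nonneg a) ha
  positivity

theorem one_sub_sq_norm_blaschkeFactor {a z : ℂ} (h : 1 - z * conj a ≠ 0) :
    1 - ‖blaschkeFactor a z‖ ^ 2 = (1 - ‖z‖ ^ 2) * blaschkeKernel a z := by
  have h' : ‖1 - z * conj a‖ ^ 2 ≠ 0 := by positivity
  rw [blaschkeFactor, blaschkeKernel, norm_div, div_pow, ← mul_div_assoc, eq_div_iff h',
    one_sub_mul, div_mul_cancel₀ _ h']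
  linear_combination sq_norm_one_sub_mul_conj_sub_sq_norm_sub z a

theorem continuousAt_blaschkeKernel {a z : ℂ} (h : 1 - z * conj a ≠ 0) :
    ContinuousAt (blaschkeKernel a) z :=
  continuousAt_const.div (by fun_prop) (by positivity)

theorem tendsto_one_sub_sq_norm_blaschkeFactor_div {a t : ℂ} (h : 1 - t * conj a ≠ 0) :
    Tendsto (fun z => (1 - ‖blaschkeFactor a z‖ ^ 2) / (1 - ‖z‖ ^ 2))
      (𝓝[{z | ‖z‖ ≠ 1}] t) (𝓝 (blaschkeKernel a t)) := by
  refine ((continuousAt_blaschkeKernel h).tendsto.mono_left nhdsWithin_le_nhds).congr' ?_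
  have hden : ∀ᶠ z in 𝓝 t, 1 - z * conj a ≠ 0 :=
    (show ContinuousAt (fun z : ℂ => 1 - z * conj a) t by fun_prop).eventually_ne h
  filter_upwards [nhdsWithin_le_nhds hden, self_mem_nhdsWithin] with z hz hz1
  have : 1 - ‖z‖ ^ 2 ≠ 0 := by
    rw [sub_ne_zero, ne_comm]
    exact mt (pow_eq_one_iff_of_nonneg (norm_nonneg z) two_ne_zero).1 hz1
  rw [one_sub_sq_norm_blaschkeFactor hz, mul_div_cancel_left₀ _ this]

section

variable {α 𝕜 : Type*} [NormedField 𝕜] {l : Filter α} {d : α → ℝ}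

theorem tendsto_one_sub_sq_norm_mul_div {g h : α → 𝕜} {L M : ℝ}
    (hg : Tendsto (fun x => ‖g x‖) l (𝓝 1))
    (hgL : Tendsto (fun x => (1 - ‖g x‖ ^ 2) / d x) l (𝓝 L))
    (hhM : Tendsto (fun x => (1 - ‖h x‖ ^ 2) / d x) l (𝓝 M)) :
    Tendsto (fun x => (1 - ‖g x * h x‖ ^ 2) / d x) l (𝓝 (L + M)) := by
  have key : ∀ x, (1 - ‖g x * h x‖ ^ 2) / d x
      = (1 - ‖g x‖ ^ 2) / d x + ‖g x‖ ^ 2 * ((1 - ‖h x‖ ^ 2) / d x) := by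
    intro x
    rw [norm_mul]
    ring
  simp_rw [key]
  simpa using hgL.add ((hg.pow 2).mul hhM)

theorem tendsto_one_sub_sq_norm_prod_div {ι : Type*} {s : Finset ι} {g : ι → α → 𝕜}
    {L : ι → ℝ}
    (hg : ∀ i ∈ s, Tendsto (fun x => ‖g i x‖) l (𝓝 1))
    (hL : ∀ i ∈ s, Tendsto (fun x => (1 - ‖g i x‖ ^ 2) / d x) l (𝓝 (L i))) :
    Tendsto (fun x => (1 - ‖∏ i ∈ s, g i x‖ ^ 2) / d x) l (𝓝 (∑ i ∈ s, L i)) := by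
  induction s using Finset.cons_induction with
  | empty => simpa using tendsto_const_nhds
  | cons i s _ ih =>
    rw [Finset.forall_mem_cons] at hg hL
    simp_rw [Finset.prod_cons, Finset.sum_cons]
    exact tendsto_one_sub_sq_norm_mul_div hg.1 hL.1 (ih hg.2 hL.2)

end

theorem mul_deriv_mul_conj_eq_mul_logDeriv {f : ℂ → ℂ} {t : ℂ} (hf : ‖f t‖ = 1) :
    t * deriv f t * conj (f t) = t * logDeriv f t := by
  rw [logDeriv_apply, ← inv_eq_conj hf, div_eq_mul_inv, mul_assoc]

theorem blaschke_boundary_derivative (k : ℕ) (c : ℂ) (a : Fin k → ℂ)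
    (hc : ‖c‖ = 1) (ha : ∀ i, ‖a i‖ < 1)
    (f : ℂ → ℂ)
    (hf : f = fun z => c * ∏ i, (z - a i) / (1 - z * conj (a i)))
    (t : ℂ) (ht : ‖t‖ = 1) :
    t * deriv f t * conj (f t) = ((‖deriv f t‖ : ℝ) : ℂ) ∧
      Tendsto (fun z => (1 - ‖f z‖ ^ 2) / (1 - ‖z‖ ^ 2))
        (𝓝[{z : ℂ | ‖z‖ ≠ 1}] t) (𝓝 ‖deriv f t‖) := by
  replace hf : f = fun z => c * ∏ i, blaschkeFactor (a i) z := hf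
  have hta (i : Fin k) : t ≠ a i := fun h => (ha i).ne (h ▸ ht)
  have hden (i : Fin k) := one_sub_mul_conj_ne_zero ht (hta i)
  have hfactor (i : Fin k) := norm_blaschkeFactor_of_norm_eq_one ht (hta i)
  have hft : ‖f t‖ = 1 := by simp [hf, norm_prod, hc, hfactor]
  have hderiv : t * deriv f t * conj (f t) = ((∑ i, blaschkeKernel (a i) t : ℝ) : ℂ) := by
    rw [mul_deriv_mul_conj_eq_mul_logDeriv hft, hf,
      logDeriv_const_mul _ _ (norm_pos_iff.1 (hc ▸ one_pos)), logDeriv_prod, Finset.mul_sum,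
      ofReal_sum]
    · exact Finset.sum_congr rfl fun i _ => mul_logDeriv_blaschkeFactor ht (hta i)
    · exact fun i _ => norm_pos_iff.1 (hfactor i ▸ one_pos)
    · exact fun i _ => (hasDerivAt_blaschkeFactor (hden i)).differentiableAt
  have hnorm : ‖deriv f t‖ = ∑ i, blaschkeKernel (a i) t := by
    have h := congrArg norm hderiv
    rwa [norm_mul, norm_mul, norm_conj, ht, hft, one_mul, mul_one, norm_real, Real.norm_of_nonneg
      (Finset.sum_nonneg fun i _ => blaschkeKernel_nonneg (ha i).le t)] at h
  refine ⟨hnorm ▸ hderiv, hnorm ▸ ?_⟩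
  simp only [hf, norm_mul, hc, one_mul]
  exact tendsto_one_sub_sq_norm_prod_div
    (fun i _ => hfactor i ▸
      (hasDerivAt_blaschkeFactor (hden i)).continuousAt.norm.tendsto.mono_left nhdsWithin_le_nhds)
    (fun i _ => tendsto_one_sub_sq_norm_blaschkeFactor_div (hden i))
end

section
/- Let f be a finite Blaschke product of degree k and let t₁,…,tₙ be distinct points in the closed unit disk. Define the Schwarz–Pick matrix P = [p(t_i,t_j)] where p(t_i,t_j) = t_i·f'(t_i)·conj(f(t_i)) if i = j and |t_i| = 1, and p(t_i,t_j) = (1 - f(t_i)·conj(f(t_j)))/(1 - t_i·conj(t_j)) otherwise. Then P is positive semidefinite and rank P = min(n, k). -/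
/-!
Let `b_a(z) = (z - a)/(1 - z·conj a)` and let
`g_m = √(1 - |a_m|²)/(1 - z·conj a_m) · ∏_{l<m} b_{a_l}` be the Takenaka–Malmquist functions of
the zeros of `f`. Splitting off one Blaschke factor at a
time gives, on the closed disk,
  `1 - f(z)·conj f(w) = (1 - z·conj w) · ∑_m g_m(z)·conj g_m(w)`,
and on the circle, by the product rule and `|b_a(t)| = |f(t)| = 1`,
  `t·f'(t)·conj f(t) = ∑_m |g_m(t)|²`.
So `P = G·Gᴴ` with `G = [g_m(t_i)]` of size `n × k`: `P` is positive semidefinite and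
`rank P = rank G`. Over the common denominator `∏_l (1 - z·conj a_l)`, `g_m` is `√(1 - |a_m|²)`
times the polynomial `∏_{l<m} (X - a_l) · ∏_{l>m} (1 - conj a_l·X)` of degree `< k`. These `k`
polynomials are linearly independent (evaluate at `a_0`, then cancel `X - a_0`), so `G` is a
rectangular Vandermonde matrix of the distinct `t_i` multiplied by invertible matrices on both
sides, and has rank `min n k`.
-/

open Complex ComplexConjugate Matrix Polynomial
open scoped ComplexOrder

theorem Complex.eq_and_norm_eq_one_of_one_sub_mul_conj_eq_zero {z w : ℂ} (hz : ‖z‖ ≤ 1)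
    (hw : ‖w‖ ≤ 1) (h : 1 - z * conj w = 0) : z = w ∧ ‖z‖ = 1 := by
  have hzw : z * conj w = 1 := by linear_combination -h
  have hnorm : ‖z‖ * ‖w‖ = 1 := by simpa using congrArg norm hzw
  have hz1 : ‖z‖ = 1 := by nlinarith [norm_nonneg z, norm_nonneg w]
  have hw1 : ‖w‖ = 1 := by nlinarith [norm_nonneg z, norm_nonneg w]
  have hwconj : w * conj w = 1 := by rw [mul_conj', hw1]; norm_num
  exact ⟨by linear_combination w * hzw - z * hwconj, hz1⟩

theorem Complex.one_sub_mul_conj_ne_zero {z a : ℂ} (hz : ‖z‖ ≤ 1) (ha : ‖a‖ < 1) :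
    1 - z * conj a ≠ 0 := fun h => by
  obtain ⟨rfl, h1⟩ := Complex.eq_and_norm_eq_one_of_one_sub_mul_conj_eq_zero hz ha.le h
  exact ha.ne h1

theorem Matrix.rank_of_pow_eq_min {K : Type*} [Field K] {n k : ℕ} {v : Fin n → K}
    (hv : Function.Injective v) : (of fun i (d : Fin k) => v i ^ (d : ℕ)).rank = min n k := by
  set V : Matrix (Fin n) (Fin k) K := of fun i d => v i ^ (d : ℕ)
  have hsq {m : ℕ} {w : Fin m → K} (hw : Function.Injective w) : (vandermonde w).rank = m := by
    rw [rank_of_isUnit _ ((isUnit_iff_isUnit_det _).2 (det_vandermonde_ne_zero_iff.2 hw).isUnit),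
      Fintype.card_fin]
  rcases le_total n k with h | h
  · rw [min_eq_left h]
    refine (rank_le_height V).antisymm ?_
    exact (hsq hv).symm.trans_le (rank_submatrix_le V id (Fin.castLE h))
  · rw [min_eq_right h]
    refine (rank_le_width V).antisymm ?_
    exact (hsq (hv.comp (Fin.castLE_injective h))).symm.trans_le
      (rank_submatrix_le V (Fin.castLE h) id)

theorem Matrix.rank_of_eval_eq_min {K : Type*} [Field K] {n k : ℕ} {p : Fin k → K[X]}
    (hp : LinearIndependent K p) (hdeg : ∀ m, (p m).natDegree < k) {v : Fin n → K}
    (hv : Function.Injective v) : (of fun i m => (p m).eval (v i)).rank = min n k := by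
  have hmem (m : Fin k) : p m ∈ degreeLT K k :=
    mem_degreeLT.2 (degree_le_natDegree.trans_lt (WithBot.coe_lt_coe.2 (hdeg m)))
  set coeffs : Matrix (Fin k) (Fin k) K := of fun d m => (p m).coeff d
  have hcoeffs : IsUnit coeffs := by
    rw [← linearIndependent_cols_iff_isUnit]
    have hsub : LinearIndependent K fun m => (⟨p m, hmem m⟩ : degreeLT K k) :=
      LinearIndependent.of_comp (degreeLT K k).subtype hp
    exact hsub.map' _ (degreeLTEquiv K k).ker
  have hfactor :
      (of fun i m => (p m).eval (v i)) = (of fun i (d : Fin k) => v i ^ (d : ℕ)) * coeffs := by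
    ext i m
    rw [of_apply, eval_eq_sum_range' (hdeg m), ← Fin.sum_univ_eq_sum_range, mul_apply]
    simp only [coeffs, of_apply, mul_comm]
  rw [hfactor, rank_mul_eq_left_of_isUnit_det _ _ ((isUnit_iff_isUnit_det _).1 hcoeffs),
    rank_of_pow_eq_min hv]

namespace Blaschke

noncomputable def factor (a z : ℂ) : ℂ := (z - a) / (1 - z * conj a)

noncomputable def szego (a z : ℂ) : ℂ := √(1 - ‖a‖ ^ 2) / (1 - z * conj a)

theorem szego_mul_conj {a : ℂ} (ha : ‖a‖ ≤ 1) (z w : ℂ) :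
    szego a z * conj (szego a w) = (1 - ‖a‖ ^ 2) / ((1 - z * conj a) * (1 - conj w * a)) := by
  have hsq : (√(1 - ‖a‖ ^ 2) : ℂ) * √(1 - ‖a‖ ^ 2) = 1 - ‖a‖ ^ 2 := by
    rw [← ofReal_mul, Real.mul_self_sqrt (by nlinarith [norm_nonneg a])]; push_cast; ring
  simp only [szego, map_div₀, conj_ofReal, map_sub, map_one, map_mul, conj_conj]
  rw [div_mul_div_comm, hsq]

theorem one_sub_factor_mul_conj {a z w : ℂ} (ha : ‖a‖ < 1) (hz : ‖z‖ ≤ 1) (hw : ‖w‖ ≤ 1) :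
    1 - factor a z * conj (factor a w) = (1 - z * conj w) * (szego a z * conj (szego a w)) := by
  have hz' := one_sub_mul_conj_ne_zero hz ha
  have hw' : 1 - a * conj w ≠ 0 := by
    simpa [mul_comm] using (map_ne_zero (starRingEnd ℂ)).2 (one_sub_mul_conj_ne_zero hw ha)
  rw [szego_mul_conj ha.le]
  simp only [factor, map_div₀, map_sub, map_one, map_mul, conj_conj]
  field_simp
  rw [← mul_conj']
  ring

noncomputable def product {k : ℕ} (c : ℂ) (a : Fin k → ℂ) (z : ℂ) : ℂ := c * ∏ i, factor (a i) z

theorem product_succ {k : ℕ} (c : ℂ) (a : Fin (k + 1) → ℂ) :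
    product c a = fun z => factor (a 0) z * product c (Fin.tail a) z := by
  ext z
  simp only [product, Fin.prod_univ_succ, Fin.tail]
  ring

-- `malmquist a m = szego (a m) * ∏_{l<m} factor (a l)`, by recursion on the first zero.
noncomputable def malmquist : {k : ℕ} → (Fin k → ℂ) → Fin k → ℂ → ℂ
  | 0, _ => finZeroElim
  | _ + 1, a => Fin.cons (szego (a 0)) fun m z => factor (a 0) z * malmquist (Fin.tail a) m z

theorem one_sub_product_mul_conj {k : ℕ} {c : ℂ} (hc : ‖c‖ = 1) {a : Fin k → ℂ}
    (ha : ∀ i, ‖a i‖ < 1) {z w : ℂ} (hz : ‖z‖ ≤ 1) (hw : ‖w‖ ≤ 1) :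
    1 - product c a z * conj (product c a w)
      = (1 - z * conj w) * ∑ m, malmquist a m z * conj (malmquist a m w) := by
  induction k with
  | zero =>
    simp [product, mul_conj', hc]
  | succ k ih =>
    rw [product_succ, Fin.sum_univ_succ]
    simp only [malmquist, Fin.cons_zero, Fin.cons_succ, map_mul, mul_mul_mul_comm,
      ← Finset.mul_sum]
    have h0 := one_sub_factor_mul_conj (ha 0) hz hw
    have h1 := ih (a := Fin.tail a) (fun i => ha i.succ)
    linear_combination h0 + factor (a 0) z * conj (factor (a 0) w) * h1

theorem product_mul_conj_self {k : ℕ} {c : ℂ} (hc : ‖c‖ = 1) {a : Fin k → ℂ}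
    (ha : ∀ i, ‖a i‖ < 1) {t : ℂ} (ht : ‖t‖ = 1) :
    product c a t * conj (product c a t) = 1 := by
  have h := one_sub_product_mul_conj hc ha ht.le ht.le
  rw [mul_conj' t, ht, ofReal_one, one_pow, sub_self, zero_mul] at h
  linear_combination -h

theorem hasDerivAt_factor {a z : ℂ} (h : 1 - z * conj a ≠ 0) :
    HasDerivAt (factor a) ((1 - ‖a‖ ^ 2) / (1 - z * conj a) ^ 2) z := by
  have hnum : HasDerivAt (fun y => y - a) 1 z := (hasDerivAt_id z).sub_const a
  have hden : HasDerivAt (fun y => 1 - y * conj a) (-conj a) z := by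
    simpa using ((hasDerivAt_id z).mul_const (conj a)).const_sub 1
  exact (hnum.div hden h).congr_deriv (by rw [← mul_conj']; ring)

theorem mul_deriv_factor_mul_conj {a t : ℂ} (ha : ‖a‖ < 1) (ht : ‖t‖ = 1) :
    t * deriv (factor a) t * conj (factor a t) = szego a t * conj (szego a t) := by
  have hden := one_sub_mul_conj_ne_zero ht.le ha
  have hden' : 1 - conj t * a ≠ 0 := by
    simpa using (map_ne_zero (starRingEnd ℂ)).2 hden
  have htt : t * conj t = 1 := by rw [mul_conj', ht]; norm_num
  rw [(hasDerivAt_factor hden).deriv, szego_mul_conj ha.le]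
  simp only [factor, map_div₀, map_sub, map_mul, map_one, conj_conj]
  field_simp
  linear_combination (1 - (‖a‖ : ℂ) ^ 2) * htt

theorem differentiableAt_product {k : ℕ} (c : ℂ) {a : Fin k → ℂ} (ha : ∀ i, ‖a i‖ < 1) {z : ℂ}
    (hz : ‖z‖ ≤ 1) : DifferentiableAt ℂ (product c a) z := by
  unfold product factor
  fun_prop (disch := exact one_sub_mul_conj_ne_zero hz (ha _))

theorem mul_deriv_product_mul_conj {k : ℕ} {c : ℂ} (hc : ‖c‖ = 1) {a : Fin k → ℂ}
    (ha : ∀ i, ‖a i‖ < 1) {t : ℂ} (ht : ‖t‖ = 1) :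
    t * deriv (product c a) t * conj (product c a t)
      = ∑ m, malmquist a m t * conj (malmquist a m t) := by
  induction k with
  | zero => simp [show product c a = fun _ => c from funext fun _ => by simp [product]]
  | succ k ih =>
    have ha' : ∀ i, ‖Fin.tail a i‖ < 1 := fun i => ha i.succ
    have hfactor : DifferentiableAt ℂ (factor (a 0)) t :=
      (hasDerivAt_factor (one_sub_mul_conj_ne_zero ht.le (ha 0))).differentiableAt
    rw [product_succ, deriv_fun_mul hfactor (differentiableAt_product c ha' ht.le),
      Fin.sum_univ_succ]
    simp only [malmquist, Fin.cons_zero, Fin.cons_succ, map_mul, mul_mul_mul_comm,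
      ← Finset.mul_sum]
    linear_combination product c (Fin.tail a) t * conj (product c (Fin.tail a) t) *
        mul_deriv_factor_mul_conj (ha 0) ht +
      szego (a 0) t * conj (szego (a 0) t) * product_mul_conj_self hc ha' ht +
      factor (a 0) t * conj (factor (a 0) t) * ih ha'

-- `malmquistNumerator a m = ∏_{l<m} (X - C (a l)) * ∏_{l>m} (1 - C (conj (a l)) * X)`.
noncomputable def malmquistNumerator : {k : ℕ} → (Fin k → ℂ) → Fin k → ℂ[X]
  | 0, _ => finZeroElim
  | _ + 1, a => Fin.cons (∏ l, (1 - C (conj (Fin.tail a l)) * X))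
      fun m => (X - C (a 0)) * malmquistNumerator (Fin.tail a) m

theorem natDegree_malmquistNumerator_lt {k : ℕ} (a : Fin k → ℂ) (m : Fin k) :
    (malmquistNumerator a m).natDegree < k := by
  induction k with
  | zero => exact m.elim0
  | succ k ih =>
    induction m using Fin.cases with
    | zero =>
      simp only [malmquistNumerator, Fin.cons_zero]
      refine Nat.lt_succ_of_le ((natDegree_prod_le _ _).trans
        ((Finset.sum_le_card_nsmul _ _ 1 fun l _ => ?_).trans_eq (by simp)))
      compute_degree
    | succ m =>
      simp only [malmquistNumerator, Fin.cons_succ]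
      refine (natDegree_mul_le).trans_lt ?_
      rw [natDegree_X_sub_C]
      exact Nat.add_lt_add_left (ih _ m) 1 |>.trans_eq (Nat.add_comm 1 k)

theorem linearIndependent_malmquistNumerator {k : ℕ} {a : Fin k → ℂ} (ha : ∀ i, ‖a i‖ < 1) :
    LinearIndependent ℂ (malmquistNumerator a) := by
  induction k with
  | zero => exact linearIndependent_empty_type
  | succ k ih =>
    rw [malmquistNumerator, linearIndependent_finCons]
    constructor
    · exact (ih fun i => ha i.succ).map' (LinearMap.mulLeft ℂ (X - C (a 0)))
        (LinearMap.ker_eq_bot.2 (mul_right_injective₀ (X_sub_C_ne_zero (a 0))))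
    · intro hmem
      have hspan : Submodule.span ℂ
          (Set.range fun m => (X - C (a 0)) * malmquistNumerator (Fin.tail a) m)
          ≤ LinearMap.ker (leval (a 0)) := by
        rw [Submodule.span_le]
        rintro _ ⟨m, rfl⟩
        simp
      have := hspan hmem
      simp only [LinearMap.mem_ker, leval_apply, eval_prod, eval_sub, eval_one, eval_mul, eval_C,
        eval_X] at this
      exact Finset.prod_ne_zero_iff.2 (fun l _ => by
        simpa [mul_comm, Fin.tail] using one_sub_mul_conj_ne_zero (ha 0).le (ha l.succ)) this

theorem malmquist_eq {k : ℕ} {a : Fin k → ℂ} (ha : ∀ i, ‖a i‖ < 1) {z : ℂ} (hz : ‖z‖ ≤ 1)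
    (m : Fin k) :
    malmquist a m z
      = √(1 - ‖a m‖ ^ 2) * (malmquistNumerator a m).eval z / ∏ l, (1 - z * conj (a l)) := by
  induction k with
  | zero => exact m.elim0
  | succ k ih =>
    induction m using Fin.cases with
    | zero =>
      have hprod : ∏ l : Fin k, (1 - z * conj (a l.succ)) ≠ 0 :=
        Finset.prod_ne_zero_iff.2 fun l _ => one_sub_mul_conj_ne_zero hz (ha l.succ)
      simp only [malmquist, malmquistNumerator, Fin.cons_zero, szego, eval_prod, eval_sub,
        eval_one, eval_mul, eval_C, eval_X, Fin.prod_univ_succ, Fin.tail, mul_comm _ z]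
      rw [mul_div_mul_right _ _ hprod]
    | succ m =>
      simp only [malmquist, malmquistNumerator, Fin.cons_succ]
      rw [ih (a := Fin.tail a) (fun i => ha i.succ), Fin.prod_univ_succ, eval_mul, eval_sub,
        eval_X, eval_C, factor, div_mul_div_comm]
      simp only [Fin.tail]
      ring

theorem rank_of_malmquist_eq_min {k n : ℕ} {a : Fin k → ℂ} (ha : ∀ i, ‖a i‖ < 1) {t : Fin n → ℂ}
    (ht : ∀ i, ‖t i‖ ≤ 1) (htinj : Function.Injective t) :
    (of fun i m => malmquist a m (t i)).rank = min n k := by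
  have hfactor : (of fun i m => malmquist a m (t i))
      = diagonal (fun i => (∏ l, (1 - t i * conj (a l)))⁻¹)
        * of (fun i m => (malmquistNumerator a m).eval (t i))
        * diagonal (fun m => (√(1 - ‖a m‖ ^ 2) : ℂ)) := by
    ext i m
    simp only [diagonal_mul, mul_diagonal, of_apply, malmquist_eq ha (ht i)]
    ring
  have hdenom : IsUnit (diagonal fun i => (∏ l, (1 - t i * conj (a l)))⁻¹).det := by
    rw [det_diagonal, isUnit_iff_ne_zero, Finset.prod_ne_zero_iff]
    exact fun i _ => inv_ne_zero <|
      Finset.prod_ne_zero_iff.2 fun l _ => one_sub_mul_conj_ne_zero (ht i) (ha l)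
  have hscale : IsUnit (diagonal fun m => (√(1 - ‖a m‖ ^ 2) : ℂ)).det := by
    rw [det_diagonal, isUnit_iff_ne_zero, Finset.prod_ne_zero_iff]
    exact fun m _ => ofReal_ne_zero.2 <|
      Real.sqrt_ne_zero'.2 (by nlinarith [ha m, norm_nonneg (a m)])
  rw [hfactor, rank_mul_eq_left_of_isUnit_det _ _ hscale,
    rank_mul_eq_right_of_isUnit_det _ _ hdenom]
  exact rank_of_eval_eq_min (linearIndependent_malmquistNumerator ha)
    (natDegree_malmquistNumerator_lt a) htinj

end Blaschke

theorem schwarz_pick_matrix_posSemidef_rank (k n : ℕ) (c : ℂ) (a : Fin k → ℂ)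
    (hc : ‖c‖ = 1) (ha : ∀ i, ‖a i‖ < 1)
    (f : ℂ → ℂ)
    (hf : f = fun z => c * ∏ i, (z - a i) / (1 - z * conj (a i)))
    (t : Fin n → ℂ) (ht : ∀ i, ‖t i‖ ≤ 1) (htinj : Function.Injective t)
    (P : Matrix (Fin n) (Fin n) ℂ)
    (hP : ∀ i j, P i j =
      if i = j ∧ ‖t i‖ = 1 then t i * deriv f (t i) * conj (f (t i))
      else (1 - f (t i) * conj (f (t j))) / (1 - t i * conj (t j))) :
    P.PosSemidef ∧ P.rank = min n k := by
  replace hf : f = Blaschke.product c a := hf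
  subst hf
  set G : Matrix (Fin n) (Fin k) ℂ := of fun i m => Blaschke.malmquist a m (t i)
  have hPG : P = G * Gᴴ := by
    ext i j
    rw [hP, mul_apply]
    simp only [G, conjTranspose_apply, of_apply, star_def]
    split_ifs with hdiag
    · obtain ⟨rfl, hti⟩ := hdiag
      exact Blaschke.mul_deriv_product_mul_conj hc ha hti
    · have hne : 1 - t i * conj (t j) ≠ 0 := fun h0 => by
        obtain ⟨hij, hti⟩ := eq_and_norm_eq_one_of_one_sub_mul_conj_eq_zero (ht i) (ht j) h0
        exact hdiag ⟨htinj hij, hti⟩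
      rw [div_eq_iff hne, Blaschke.one_sub_product_mul_conj hc ha (ht i) (ht j), mul_comm]
  refine ⟨hPG ▸ posSemidef_self_mul_conjTranspose G, ?_⟩
  rw [hPG, rank_self_mul_conjTranspose, Blaschke.rank_of_malmquist_eq_min ha ht htinj]
end

section
/- Let t₁,…,tₙ be distinct points on the unit circle, w₁,…,wₙ points on the unit circle, and let f be a rational function mapping the open unit disk into the closed unit disk, of degree at most n-1, satisfying f(t_i) = w_i for i = 1,…,n. Then f is a finite Blaschke product, i.e., |f(t)| = 1 for all t on the unit circle. -/
/-!
On the unit circle `conj z = z⁻¹`, so with `f*` the conjugate reflection of `f` in degree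
`n - 1`, the polynomial `R = q* q - p* p` has degree at most `2n - 2` and equals
`z ^ (n - 1) (|q|² - |p|²)` there. The Schur condition makes `|q|² - |p|² ≥ 0` on the circle and
the interpolation conditions make it vanish at the `n` nodes; a zero of a nonnegative function on
the circle is a critical point, so every node is a double root of `R`. Having `2n` roots counted
with multiplicity, `R = 0`, so `|p| = |q|` on the circle, and coprimality keeps `q` from vanishing
there.
-/

open Complex Polynomial

open scoped ComplexOrder ComplexConjugate

-- In `ComplexOrder`, `g x ≤ g y` means `(g x).re ≤ (g y).re` and `(g x).im = (g y).im`.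
theorem IsLocalMin.hasDerivAt_eq_zero_of_complex {g : ℝ → ℂ} {g' : ℂ} {x : ℝ}
    (hmin : IsLocalMin g x) (hg : HasDerivAt g g' x) : g' = 0 := by
  have hre : IsLocalMin (re ∘ g) x := hmin.mono fun _ hy => (le_def.1 hy).1
  have him : IsLocalMin (im ∘ g) x := hmin.mono fun _ hy => (le_def.1 hy).2.le
  exact Complex.ext (hre.hasDerivAt_eq_zero (reCLM.hasFDerivAt.comp_hasDerivAt x hg))
    (him.hasDerivAt_eq_zero (imCLM.hasFDerivAt.comp_hasDerivAt x hg))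

theorem HasDerivAt.eq_zero_of_isMinOn_sphere {f : ℂ → ℂ} {f' z₀ : ℂ} (hf : HasDerivAt f f' z₀)
    (hz₀ : ‖z₀‖ = 1) (hmin : IsMinOn f (Metric.sphere 0 1) z₀) : f' = 0 := by
  have hexp : cexp (arg z₀ * I) = z₀ := by
    simpa [hz₀] using norm_mul_exp_arg_mul_I z₀
  have hcirc : HasDerivAt (fun θ : ℝ => cexp (θ * I)) (z₀ * I) (arg z₀) := by
    simpa [hexp] using ((hasDerivAt_id (arg z₀)).ofReal_comp.mul_const I).cexp
  have hlocal : IsLocalMin (fun θ : ℝ => f (cexp (θ * I))) (arg z₀) :=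
    Filter.Eventually.of_forall fun θ => by
      simpa only [hexp] using isMinOn_iff.1 hmin _ (by simp : cexp (θ * I) ∈ Metric.sphere 0 1)
  rw [← hexp] at hf
  have := hlocal.hasDerivAt_eq_zero_of_complex (hf.comp (arg z₀) hcirc)
  exact (mul_eq_zero.1 this).resolve_right (by simp [← norm_ne_zero_iff, hz₀])

namespace Polynomial

theorem norm_eval_le_of_norm_div_le_one {p q : ℂ[X]} (hpole : ∀ z : ℂ, ‖z‖ < 1 → q.eval z ≠ 0)
    (hschur : ∀ z : ℂ, ‖z‖ < 1 → ‖p.eval z / q.eval z‖ ≤ 1) {z : ℂ} (hz : ‖z‖ ≤ 1) :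
    ‖p.eval z‖ ≤ ‖q.eval z‖ := by
  have hdisk (u : ℂ) (hu : u ∈ Metric.ball 0 1) : ‖p.eval u‖ ≤ ‖q.eval u‖ := by
    rw [mem_ball_zero_iff] at hu
    simpa [div_le_one (norm_pos_iff.2 (hpole u hu))] using hschur u hu
  exact le_on_closure hdisk (by fun_prop) (by fun_prop) (by simpa [closure_ball] using hz)

theorem isRoot_derivative_of_nonneg_on_sphere {R : ℂ[X]} {m : ℕ}
    (hR : ∀ z : ℂ, ‖z‖ = 1 → 0 ≤ R.eval z * z⁻¹ ^ m) {z₀ : ℂ} (hz₀ : ‖z₀‖ = 1)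
    (hroot : R.IsRoot z₀) : R.derivative.IsRoot z₀ := by
  have hz₀ne : z₀ ≠ 0 := by simp [← norm_ne_zero_iff, hz₀]
  have hf := (R.hasDerivAt z₀).mul ((hasDerivAt_inv hz₀ne).pow m)
  have hmin : IsMinOn (fun z => R.eval z * z⁻¹ ^ m) (Metric.sphere 0 1) z₀ :=
    isMinOn_iff.2 fun z hz => by simpa [hroot.eq_zero] using hR z (by simpa using hz)
  simpa [hroot.eq_zero, hz₀ne] using hf.eq_zero_of_isMinOn_sphere hz₀ hmin

theorem eq_zero_of_isRoot_of_isRoot_derivative {K ι : Type*} [Field K] [Fintype ι]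
    {t : ι → K} (ht : Function.Injective t) {R : K[X]} (hroot : ∀ i, R.IsRoot (t i))
    (hderiv : ∀ i, R.derivative.IsRoot (t i)) (hdeg : R.natDegree < 2 * Fintype.card ι) :
    R = 0 := by
  by_contra hR
  have hsq (i : ι) : (X - C (t i)) ^ 2 ∣ R :=
    (le_rootMultiplicity_iff hR).1 ((one_lt_rootMultiplicity_iff_isRoot hR).2 ⟨hroot i, hderiv i⟩)
  have hcop : Pairwise fun i j => IsCoprime ((X - C (t i)) ^ 2) ((X - C (t j)) ^ 2) :=
    fun i j hij => (isCoprime_X_sub_C_of_isUnit_sub (sub_ne_zero.2 (ht.ne hij)).isUnit).pow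
  have hprod := natDegree_le_of_dvd (Fintype.prod_dvd_of_coprime hcop hsq) hR
  rw [natDegree_prod _ _ fun i _ => pow_ne_zero _ (X_sub_C_ne_zero _)] at hprod
  simp only [natDegree_pow, natDegree_sub_C, natDegree_X, mul_one, Finset.sum_const,
    Finset.card_univ, smul_eq_mul] at hprod
  omega

noncomputable def conjReflect (N : ℕ) (f : ℂ[X]) : ℂ[X] :=
  reflect N (f.map (starRingEnd ℂ))

theorem natDegree_conjReflect_le {N : ℕ} {f : ℂ[X]} (hf : f.natDegree ≤ N) :
    (f.conjReflect N).natDegree ≤ N :=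
  natDegree_reflect_le.trans (max_le le_rfl (by rwa [natDegree_map]))

theorem eval_conjReflect {N : ℕ} {f : ℂ[X]} (hf : f.natDegree ≤ N) {z : ℂ}
    (hz : ‖z‖ = 1) : (f.conjReflect N).eval z = z ^ N * conj (f.eval z) := by
  have hconj : conj z = z⁻¹ := (RCLike.inv_eq_conj hz).symm
  have hz₀ : z ≠ 0 := by simp [← norm_ne_zero_iff, hz]
  let := invertibleOfNonzero (inv_ne_zero hz₀)
  have := eval₂_reflect_mul_pow (RingHom.id ℂ) z⁻¹ N (f.map (starRingEnd ℂ))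
    (by rwa [natDegree_map])
  rw [invOf_eq_inv, inv_inv, eval₂_id, eval₂_id, ← hconj, eval_map_apply] at this
  rw [conjReflect, ← this, hconj, mul_left_comm, ← mul_pow, mul_inv_cancel₀ hz₀, one_pow, mul_one]

noncomputable def circleDefect (N : ℕ) (p q : ℂ[X]) : ℂ[X] :=
  q.conjReflect N * q - p.conjReflect N * p

section circleDefect

variable {N : ℕ} {p q : ℂ[X]}

theorem natDegree_circleDefect_le (hp : p.natDegree ≤ N) (hq : q.natDegree ≤ N) :
    (circleDefect N p q).natDegree ≤ 2 * N := by
  refine (natDegree_sub_le _ _).trans (max_le ?_ ?_) <;> refine natDegree_mul_le.trans ?_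
  · linarith [natDegree_conjReflect_le hq]
  · linarith [natDegree_conjReflect_le hp]

theorem eval_circleDefect (hp : p.natDegree ≤ N) (hq : q.natDegree ≤ N) {z : ℂ}
    (hz : ‖z‖ = 1) :
    (circleDefect N p q).eval z = z ^ N * ((‖q.eval z‖ ^ 2 - ‖p.eval z‖ ^ 2 : ℝ) : ℂ) := by
  simp only [circleDefect, eval_sub, eval_mul, eval_conjReflect hp hz, eval_conjReflect hq hz,
    mul_assoc, conj_mul']
  push_cast
  ring

theorem eval_circleDefect_mul_inv_pow (hp : p.natDegree ≤ N) (hq : q.natDegree ≤ N) {z : ℂ}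
    (hz : ‖z‖ = 1) :
    (circleDefect N p q).eval z * z⁻¹ ^ N = ((‖q.eval z‖ ^ 2 - ‖p.eval z‖ ^ 2 : ℝ) : ℂ) := by
  rw [eval_circleDefect hp hq hz, mul_right_comm, ← mul_pow,
    mul_inv_cancel₀ (by simp [← norm_ne_zero_iff, hz]), one_pow, one_mul]

end circleDefect

end Polynomial

theorem low_degree_solution_is_blaschke_general (n : ℕ) (hn : 0 < n) (t w : Fin n → ℂ)
    (ht : ∀ i, ‖t i‖ = 1) (hw : ∀ i, ‖w i‖ = 1)
    (htinj : Function.Injective t)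
    (p q : Polynomial ℂ) (hcop : IsCoprime p q)
    (hdegp : p.natDegree ≤ n - 1) (hdegq : q.natDegree ≤ n - 1)
    (hpole : ∀ z : ℂ, ‖z‖ < 1 → q.eval z ≠ 0)
    (hschur : ∀ z : ℂ, ‖z‖ < 1 →
      ‖p.eval z / q.eval z‖ ≤ 1)
    (hinterp : ∀ i, q.eval (t i) ≠ 0 ∧ p.eval (t i) = w i * q.eval (t i)) :
    ∀ z : ℂ, ‖z‖ = 1 →
      q.eval z ≠ 0 ∧ ‖p.eval z / q.eval z‖ = 1 := by
  set R := circleDefect (n - 1) p q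
  have hreal (z : ℂ) (hz : ‖z‖ = 1) :
      R.eval z * z⁻¹ ^ (n - 1) = ((‖q.eval z‖ ^ 2 - ‖p.eval z‖ ^ 2 : ℝ) : ℂ) :=
    eval_circleDefect_mul_inv_pow hdegp hdegq hz
  have hroot (i : Fin n) : R.IsRoot (t i) := by
    simp [R, eval_circleDefect hdegp hdegq (ht i), (hinterp i).2, hw i]
  have hnonneg (z : ℂ) (hz : ‖z‖ = 1) : 0 ≤ R.eval z * z⁻¹ ^ (n - 1) := by
    rw [hreal z hz, zero_le_real, sub_nonneg]
    gcongr
    exact norm_eval_le_of_norm_div_le_one hpole hschur hz.le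
  have hdeg : R.natDegree < 2 * Fintype.card (Fin n) := by
    have : R.natDegree ≤ 2 * (n - 1) := natDegree_circleDefect_le hdegp hdegq
    rw [Fintype.card_fin]
    omega
  have hR : R = 0 := eq_zero_of_isRoot_of_isRoot_derivative htinj hroot
    (fun i => isRoot_derivative_of_nonneg_on_sphere hnonneg (ht i) (hroot i)) hdeg
  intro z hz
  have hpq : ‖p.eval z‖ = ‖q.eval z‖ := by
    have h := hreal z hz
    rw [hR, eval_zero, zero_mul, eq_comm, ofReal_eq_zero, sub_eq_zero] at h
    exact (sq_eq_sq₀ (norm_nonneg _) (norm_nonneg _)).1 h.symm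
  have hqz : q.eval z ≠ 0 := fun hq0 =>
    (aeval_ne_zero_of_isCoprime hcop z).elim (fun h => h (by simpa [hq0] using hpq)) (· hq0)
  exact ⟨hqz, by rw [norm_div, hpq, div_self (norm_ne_zero_iff.2 hqz)]⟩

theorem low_degree_solution_is_blaschke (n : ℕ) (hn : 0 < n) (t w : Fin n → ℂ)
    (ht : ∀ i, ‖t i‖ = 1) (hw : ∀ i, ‖w i‖ = 1)
    (htinj : Function.Injective t)
    (p q : Polynomial ℂ) (hq : q ≠ 0) (hcop : IsCoprime p q)
    (hdegp : p.natDegree ≤ n - 1) (hdegq : q.natDegree ≤ n - 1)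
    (hpole : ∀ z : ℂ, ‖z‖ < 1 → q.eval z ≠ 0)
    (hschur : ∀ z : ℂ, ‖z‖ < 1 →
      ‖p.eval z / q.eval z‖ ≤ 1)
    (hinterp : ∀ i, q.eval (t i) ≠ 0 ∧ p.eval (t i) = w i * q.eval (t i)) :
    ∀ z : ℂ, ‖z‖ = 1 →
      q.eval z ≠ 0 ∧ ‖p.eval z / q.eval z‖ = 1 :=
  low_degree_solution_is_blaschke_general n hn t w ht hw htinj p q hcop hdegp hdegq hpole hschur
    hinterp
end

section
/- Let t₁,…,tₙ be distinct unimodular points and w ∈ 𝕋. If f is a rational function of degree at most n-1 mapping the open unit disk into the closed unit disk and f(t_i) = w for all i = 1,…,n, then f is the constant function w. -/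
open Complex Polynomial

theorem constant_data_forces_constant_general (n : ℕ) (hn : 0 < n) (t : Fin n → ℂ) (w : ℂ)
    (htinj : Function.Injective t)
    (p q : Polynomial ℂ)
    (hdegp : p.natDegree ≤ n - 1) (hdegq : q.natDegree ≤ n - 1)
    (hinterp : ∀ i, q.eval (t i) ≠ 0 ∧ p.eval (t i) = w * q.eval (t i)) :
    p = Polynomial.C w * q := by
  refine eq_of_natDegree_lt_card_of_eval_eq p (C w * q) htinj (fun i ↦ ?_) ?_
  · simp [(hinterp i).2]
  · have hdegwq : (C w * q).natDegree ≤ n - 1 := natDegree_C_mul_le w q |>.trans hdegq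
    rw [Fintype.card_fin]
    omega

theorem constant_data_forces_constant (n : ℕ) (hn : 0 < n) (t : Fin n → ℂ) (w : ℂ)
    (ht : ∀ i, ‖t i‖ = 1) (hw : ‖w‖ = 1)
    (htinj : Function.Injective t)
    (p q : Polynomial ℂ) (hq : q ≠ 0) (hcop : IsCoprime p q)
    (hdegp : p.natDegree ≤ n - 1) (hdegq : q.natDegree ≤ n - 1)
    (hpole : ∀ z : ℂ, ‖z‖ < 1 → q.eval z ≠ 0)
    (hschur : ∀ z : ℂ, ‖z‖ < 1 →
      ‖p.eval z / q.eval z‖ ≤ 1)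
    (hinterp : ∀ i, q.eval (t i) ≠ 0 ∧ p.eval (t i) = w * q.eval (t i)) :
    p = Polynomial.C w * q :=
  constant_data_forces_constant_general n hn t w htinj p q hdegp hdegq hinterp
end

section
/- Let t₁,…,t_{n-1} be distinct unimodular points, wₙ a unimodular point with wₙ ≠ 1, and γ₁,…,γ_{n-1} > 0. Then the function f(z) = wₙ · (1 - Σ_{i=1}^{n-1} (1 - z·conj(tₙ))(1 - conj(wₙ)) / ((1 - z·conj(t_i))(1 - t_i·conj(tₙ))·γ_i)) / (1 - Σ_{i=1}^{n-1} (1 - z·conj(tₙ))(wₙ - 1)·conj(w_i) / ((1 - z·conj(t_i))(1 - t_i·conj(tₙ))·γ_i)) with w_i = 1 for all i ≤ n-1 satisfies f(t_i) = 1 for i = 1,…,n-1 and f(tₙ) = wₙ, where tₙ is a unimodular point distinct from t₁,…,t_{n-1}. -/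
/-!
The sum `S` vanishes at `tN` and has a simple pole at each `t i`, produced by its `i`-th term
alone. Since `wN * conj wN = 1`, `f` is the Möbius transformation
`s ↦ (wN - (wN - 1) s) / (1 - (wN - 1) s)` applied to `S`, which sends `0` to `wN` and `∞` to `1`.
-/

open Complex ComplexConjugate Topology Filter Bornology

namespace Filter.Tendsto

variable {α E : Type*} {l : Filter α} {f g : α → E}

lemma cobounded_add [SeminormedAddCommGroup E] {a : E} (hf : Tendsto f l (cobounded E))
    (hg : Tendsto g l (𝓝 a)) : Tendsto (fun x => f x + g x) l (cobounded E) := by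
  rw [← tendsto_norm_atTop_iff_cobounded] at hf ⊢
  refine tendsto_atTop_mono (fun x => ?_) (hf.atTop_add hg.norm.neg)
  have := norm_sub_le (f x + g x) (g x)
  rw [add_sub_cancel_right] at this
  linarith

lemma ne_zero_mul_cobounded [NormedDivisionRing E] {c : E} (hc : c ≠ 0)
    (hf : Tendsto f l (𝓝 c)) (hg : Tendsto g l (cobounded E)) :
    Tendsto (fun x => f x * g x) l (cobounded E) := by
  rw [← tendsto_norm_atTop_iff_cobounded] at hg ⊢
  simpa only [norm_mul] using hf.norm.pos_mul_atTop (norm_pos_iff.2 hc) hg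

end Filter.Tendsto

lemma tendsto_mobius_cobounded {𝕜 : Type*} [NormedField 𝕜] (w : 𝕜) {b : 𝕜} (hb : b ≠ 0) :
    Tendsto (fun s => (w - b * s) / (1 - b * s)) (cobounded 𝕜) (𝓝 1) := by
  have hcont : Tendsto (fun u : 𝕜 => (w * u - b) / (u - b)) (𝓝 0) (𝓝 1) := by
    have : ContinuousAt (fun u : 𝕜 => (w * u - b) / (u - b)) 0 :=
      by fun_prop (disch := simpa using hb)
    simpa [hb] using this.tendsto
  refine (hcont.comp tendsto_inv₀_cobounded).congr' ?_
  filter_upwards [eventually_ne_cobounded 0] with s hs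
  simp only [Function.comp_apply]
  field_simp

lemma one_sub_mul_conj_eq_zero_iff {a : ℂ} (ha : ‖a‖ = 1) {z : ℂ} :
    1 - z * conj a = 0 ↔ z = a := by
  have ha₀ : conj a ≠ 0 := by simp [← norm_ne_zero_iff, ha]
  rw [sub_eq_zero, eq_comm, mul_eq_one_iff_eq_inv₀ ha₀, ← inv_eq_conj ha, inv_inv]

section KernelSum

variable {ι : Type*} [Fintype ι]

noncomputable def kernelSum (t : ι → ℂ) (tN : ℂ) (γ : ι → ℝ) (z : ℂ) : ℂ :=
  ∑ i, (1 - z * conj tN) / ((1 - z * conj (t i)) * (1 - t i * conj tN) * (γ i : ℂ))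

lemma kernelSum_self {tN : ℂ} (htN : ‖tN‖ = 1) (t : ι → ℂ) (γ : ι → ℝ) :
    kernelSum t tN γ tN = 0 := by
  simp [kernelSum, (one_sub_mul_conj_eq_zero_iff htN).2 rfl]

lemma tendsto_kernelSum_cobounded [DecidableEq ι] {t : ι → ℂ} {tN : ℂ} {γ : ι → ℝ}
    (ht : ∀ i, ‖t i‖ = 1) (htinj : Function.Injective t) (htN : ‖tN‖ = 1)
    (htNt : ∀ i, tN ≠ t i) (hγ : ∀ i, γ i ≠ 0) (i : ι) :
    Tendsto (kernelSum t tN γ) (𝓝[≠] (t i)) (cobounded ℂ) := by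
  have hne {a b : ℂ} (hb : ‖b‖ = 1) (hab : a ≠ b) : 1 - a * conj b ≠ 0 :=
    (one_sub_mul_conj_eq_zero_iff hb).not.2 hab
  have hpole : Tendsto (fun z => (1 - z * conj tN) / ((1 - t i * conj tN) * (γ i : ℂ)) /
      (1 - z * conj (t i))) (𝓝[≠] (t i)) (cobounded ℂ) := by
    have hnum : (1 - t i * conj tN) / ((1 - t i * conj tN) * (γ i : ℂ)) ≠ 0 :=
      have := hne htN (htNt i).symm
      div_ne_zero this (mul_ne_zero this (by exact_mod_cast hγ i))
    have hden : Tendsto (fun z => 1 - z * conj (t i)) (𝓝[≠] (t i)) (𝓝[≠] 0) := by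
      refine tendsto_nhdsWithin_of_tendsto_nhds_of_eventually_within _ ?_ ?_
      · simpa only [(one_sub_mul_conj_eq_zero_iff (ht i)).2 rfl] using
          ((by fun_prop : Continuous fun z => 1 - z * conj (t i)).tendsto (t i)).mono_left
            nhdsWithin_le_nhds
      · filter_upwards [self_mem_nhdsWithin] with z hz
        exact hne (ht i) hz
    simp only [div_eq_mul_inv]
    exact ((Continuous.tendsto (by fun_prop) (t i)).mono_left
      nhdsWithin_le_nhds).ne_zero_mul_cobounded hnum (tendsto_inv₀_nhdsNE_zero.comp hden)
  have hrest : Tendsto (fun z => ∑ j ∈ Finset.univ.erase i, (1 - z * conj tN) /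
      ((1 - z * conj (t j)) * (1 - t j * conj tN) * (γ j : ℂ))) (𝓝 (t i)) (𝓝 _) :=
    tendsto_finsetSum _ fun j hj => ContinuousAt.tendsto <| by
      have hji : t i ≠ t j := htinj.ne (Finset.ne_of_mem_erase hj).symm
      fun_prop (disch := exact mul_ne_zero (mul_ne_zero (hne (ht j) hji)
        (hne htN (htNt j).symm)) (by exact_mod_cast hγ j))
  have hsplit : kernelSum t tN γ = fun z =>
      (1 - z * conj tN) / ((1 - t i * conj tN) * (γ i : ℂ)) / (1 - z * conj (t i)) +
      ∑ j ∈ Finset.univ.erase i, (1 - z * conj tN) /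
        ((1 - z * conj (t j)) * (1 - t j * conj tN) * (γ j : ℂ)) := funext fun z => by
    rw [kernelSum, ← Finset.add_sum_erase _ _ (Finset.mem_univ i), mul_assoc,
      div_mul_eq_div_div_swap]
  rw [hsplit]
  exact hpole.cobounded_add (hrest.mono_left nhdsWithin_le_nhds)

end KernelSum

lemma mul_one_sub_one_sub_conj_mul {w : ℂ} (hw : ‖w‖ = 1) (s : ℂ) :
    w * (1 - (1 - conj w) * s) = w - (w - 1) * s := by
  have hw' : w * conj w = 1 := by simp [mul_conj', hw]
  linear_combination s * hw'

theorem special_parametrization_interpolates (m : ℕ) (t : Fin m → ℂ) (tN wN : ℂ)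
    (ht : ∀ i, ‖t i‖ = 1) (htinj : Function.Injective t)
    (htN : ‖tN‖ = 1) (htNt : ∀ i, tN ≠ t i)
    (hwN : ‖wN‖ = 1) (hwN1 : wN ≠ 1)
    (γ : Fin m → ℝ) (hγ : ∀ i, 0 < γ i)
    (S : ℂ → ℂ)
    (hS : S = fun z => ∑ i, (1 - z * conj tN) /
      ((1 - z * conj (t i)) * (1 - t i * conj tN) * (γ i : ℂ)))
    (f : ℂ → ℂ)
    (hf : f = fun z => wN * (1 - (1 - conj wN) * S z) / (1 - (wN - 1) * S z)) :
    f tN = wN ∧ ∀ i, Tendsto f (𝓝[≠] (t i)) (𝓝 1) := by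
  change S = kernelSum t tN γ at hS
  subst hS hf
  refine ⟨by simp [kernelSum_self htN], fun i => ?_⟩
  simp only [mul_one_sub_one_sub_conj_mul hwN]
  exact (tendsto_mobius_cobounded wN (sub_ne_zero.2 hwN1)).comp
    (tendsto_kernelSum_cobounded ht htinj htN htNt (fun j => (hγ j).ne') i)
end
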